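/- arXiv:2003.10875 — 3 statements merged into one kernel-verified Lean document; each statement's English description precedes it below -/
import Mathlib

section
/- Let 0 ≤ l < k ≤ n and let λ = (λ_1, …, λ_n) ∈ Γ_k with λ_1 < 0. Then σ_{k−1}(λ|1)σ_l(λ) − σ_k(λ)σ_{l−1}(λ|1) ≥ (n/k)·((k−l)/(n−l))·(1/(n−k+1)) · Σ_{i=1}^n [σ_{k−1}(λ|i)σ_l(λ) − σ_k(λ)σ_{l−1}(λ|i)]. Since σ_l(λ) > 0, dividing by σ_l(λ)² this is exactly the statement ∂[σ_k(λ)/σ_l(λ)]/∂λ_1 ≥ (n/k)((k−l)/(n−l))(1/(n−k+1)) Σ_{i=1}^n ∂[σ_k(λ)/σ_l(λ)]/∂λ_i, where ∂[σ_k/σ_l]/∂λ_i = [σ_{k−1}(λ|i)σ_l(λ) − σ_k(λ)σ_{l−1}(λ|i)]/σ_l(λ)². (Lemma 2.5, inequality (2.7).) -/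
open Finset

noncomputable def esymm {n : ℕ} (lam : Fin n → ℝ) (m : ℤ) : ℝ :=
  if m < 0 then 0
  else ∑ s ∈ Finset.powersetCard m.toNat Finset.univ, ∏ i ∈ s, lam i

noncomputable def esymmDel {n : ℕ} (lam : Fin n → ℝ) (i : Fin n) (m : ℤ) : ℝ :=
  if m < 0 then 0
  else ∑ s ∈ Finset.powersetCard m.toNat (Finset.univ.erase i), ∏ j ∈ s, lam j

noncomputable def esymmDelSet {n : ℕ} (lam : Fin n → ℝ) (S : Finset (Fin n)) (m : ℤ) : ℝ :=
  if m < 0 then 0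
  else ∑ s ∈ Finset.powersetCard m.toNat (Finset.univ \ S), ∏ j ∈ s, lam j

def GardingCone (n k : ℕ) : Set (Fin n → ℝ) :=
  {lam | ∀ m : ℕ, 1 ≤ m → m ≤ k → 0 < esymm lam (m : ℤ)}

noncomputable def sigmaMat {n : ℕ} (A : Matrix (Fin n) (Fin n) ℝ) (m : ℤ) : ℝ :=
  if m < 0 then 0
  else ∑ s ∈ Finset.powersetCard m.toNat (Finset.univ : Finset (Fin n)),
    (A.submatrix (fun i : {x : Fin n // x ∈ s} => (i : Fin n))
                 (fun j : {x : Fin n // x ∈ s} => (j : Fin n))).det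

/-! Write `λ = (t, μ)` with `t = λ₁ < 0`. Every `σ_m(λ)` equals `σ_m(μ) + t σ_{m-1}(μ)` and
`∑ᵢ σ_m(λ|i) = (n - m) σ_m(λ)`, so the left side is `σ_{k-1}(μ) σ_l(μ) - σ_k(μ) σ_{l-1}(μ)`,
independent of `t`, while the right side is quadratic in `t`. Since `t < 0`, positivity of
`σ_m(λ)` for `m ≤ k` propagates to `σ_m(μ)`, and then Newton's inequalities for the real
numbers `μ` give the generalized Newton–Maclaurin inequalities
`σ_b σ_{a-1} / (C_b C_{a-1}) ≤ σ_{b-1} σ_a / (C_{b-1} C_a)` (`a ≤ b ≤ k`). These make the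
difference of the two sides a concave quadratic in `t` that is nonnegative at both ends of the
admissible range, `t = 0` and `σ_k(λ) = 0`. Newton's inequalities themselves are proved by
replacing `μ` with the roots of the derivative of `∏ (X - μⱼ)`, which are real by Rolle's
theorem and have the same normalized elementary symmetric functions, until only `j + 2` numbers
remain; there the inequality is Cauchy–Schwarz for the products `∏_{x ≠ i} μₓ`. -/

namespace Multiset

variable {R : Type*} [CommSemiring R]

theorem esymm_cons_succ (a : R) (s : Multiset R) (m : ℕ) :
    (a ::ₘ s).esymm (m + 1) = s.esymm (m + 1) + a * s.esymm m := by
  simp [esymm, powersetCard_cons, map_map, sum_map_mul_left]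

theorem esymm_eq_zero_of_card_lt {s : Multiset R} {m : ℕ} (h : card s < m) : s.esymm m = 0 := by
  simp [esymm, powersetCard_eq_empty m h]

end Multiset

namespace Finset

variable {ι : Type*}

theorem esymm_map_val_card {R : Type*} [CommSemiring R] (s : Finset ι) (f : ι → R) :
    (s.val.map f).esymm #s = ∏ i ∈ s, f i := by
  simp [esymm_map_val, powersetCard_self]

variable [DecidableEq ι]

theorem map_val_eq_cons_map_erase {α : Type*} {s : Finset ι} {i : ι} (hi : i ∈ s) (f : ι → α) :
    s.val.map f = f i ::ₘ (s.erase i).val.map f := by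
  rw [← Multiset.map_cons, erase_val, Multiset.cons_erase (mem_val.mpr hi)]

/-- Each `m`-subset of `s` avoids exactly `#s - m` points of `s`. -/
theorem sum_esymm_erase {R : Type*} [CommSemiring R] (s : Finset ι) (f : ι → R) (m : ℕ) :
    ∑ i ∈ s, ((s.erase i).val.map f).esymm m = (#s - m) • (s.val.map f).esymm m := by
  have hfilter : ∀ i ∈ s, ((s.erase i).val.map f).esymm m
      = ∑ t ∈ (powersetCard m s).filter (i ∉ ·), ∏ j ∈ t, f j := by
    intro i _
    rw [esymm_map_val]
    congr 1
    ext t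
    simp [mem_powersetCard, subset_erase, and_assoc, and_comm]
  rw [sum_congr rfl hfilter, esymm_map_val, smul_sum]
  simp_rw [sum_filter]
  rw [sum_comm]
  refine sum_congr rfl fun t ht => ?_
  rw [mem_powersetCard] at ht
  rw [sum_ite, sum_const_zero, add_zero, sum_const, ← sdiff_eq_filter, card_sdiff_of_subset ht.1,
    ht.2]

theorem two_mul_esymm_mul_esymm_le_sq (s : Finset ι) (f : ι → ℝ) {j : ℕ} (hs : #s = j + 2) :
    2 * (j + 2) * ((s.val.map f).esymm j * (s.val.map f).esymm (j + 2))
      ≤ (j + 1) * (s.val.map f).esymm (j + 1) ^ 2 := by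
  set b : ι → ℝ := fun i => ∏ x ∈ s.erase i, f x
  have hb : ∀ i ∈ s, ((s.erase i).val.map f).esymm (j + 1) = b i := by
    intro i hi
    have hcard : j + 1 = #(s.erase i) := by rw [card_erase_of_mem hi, hs]; rfl
    rw [hcard, esymm_map_val_card]
  have hsum : ∑ i ∈ s, b i = (s.val.map f).esymm (j + 1) := by
    rw [← sum_congr rfl hb, sum_esymm_erase, hs, show j + 2 - (j + 1) = 1 by omega, one_smul]
  have hpair : ∀ i ∈ s, ∑ i' ∈ s.erase i, b i * b i'
      = (s.val.map f).esymm (j + 2) * ((s.erase i).val.map f).esymm j := by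
    intro i hi
    have hcard : #(s.erase i) = j + 1 := by rw [card_erase_of_mem hi, hs]; rfl
    have hprod : ∀ i' ∈ s.erase i, b i * b i'
        = (s.val.map f).esymm (j + 2) * (((s.erase i).erase i').val.map f).esymm j := by
      intro i' hi'
      have hcard' : #((s.erase i).erase i') = j := by rw [card_erase_of_mem hi', hcard]; rfl
      have hbi : f i' * ∏ x ∈ (s.erase i).erase i', f x = b i := mul_prod_erase _ f hi'
      have hbi' : f i' * b i' = ∏ x ∈ s, f x := mul_prod_erase s f (mem_of_mem_erase hi')
      rw [← hs, esymm_map_val_card, ← hcard', esymm_map_val_card, ← hbi, ← hbi']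
      ring
    rw [sum_congr rfl hprod, ← mul_sum, sum_esymm_erase, hcard,
      show j + 1 - j = 1 by omega, one_smul]
  have hpairs : ∑ i ∈ s, ∑ i' ∈ s.erase i, b i * b i'
      = 2 * ((s.val.map f).esymm j * (s.val.map f).esymm (j + 2)) := by
    rw [sum_congr rfl hpair, ← mul_sum, sum_esymm_erase, hs,
      show j + 2 - j = 2 by omega, nsmul_eq_mul]
    push_cast
    ring
  have hsq : ∑ i ∈ s, ∑ i' ∈ s.erase i, b i * b i' = (∑ i ∈ s, b i) ^ 2 - ∑ i ∈ s, b i ^ 2 := by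
    have hrow : ∀ i ∈ s, ∑ i' ∈ s.erase i, b i * b i' = b i * ∑ i' ∈ s, b i' - b i ^ 2 := by
      intro i hi
      rw [← mul_sum, sum_erase_eq_sub hi]
      ring
    rw [sum_congr rfl hrow, sum_sub_distrib, ← sum_mul]
    ring
  have hCS := sq_sum_le_card_mul_sum_sq (s := s) (f := b)
  rw [hs] at hCS
  push_cast at hCS
  rw [← hsum]
  linear_combination -(j + 2 : ℝ) * (hsq.symm.trans hpairs) + hCS

end Finset

namespace Multiset

open Polynomial

/-- `ν` is the multiset of roots of `(∏_{a ∈ μ} (X - a))'`: it has `card μ - 1` elements by Rolle's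
theorem, and comparing coefficients gives the identity between the `σ_j`. -/
theorem exists_esymm_derivative_roots {μ : Multiset ℝ} {N : ℕ} (hμ : card μ = N + 1) :
    ∃ ν : Multiset ℝ, card ν = N ∧
      ∀ j ≤ N, ((N : ℝ) + 1) * ν.esymm j = ((N : ℝ) + 1 - j) * μ.esymm j := by
  set P : ℝ[X] := (μ.map fun a => X - C a).prod
  have hP_deg : P.natDegree = N + 1 := by rw [natDegree_multiset_prod_X_sub_C_eq_card, hμ]
  have hP_coeff : ∀ j ≤ N + 1, P.coeff (N + 1 - j) = (-1) ^ j * μ.esymm j := by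
    intro j hj
    rw [prod_X_sub_C_coeff μ (by omega), hμ, show N + 1 - (N + 1 - j) = j by omega]
  have hD_coeff : ∀ j ≤ N,
      (derivative P).coeff (N - j) = (-1) ^ j * μ.esymm j * ((N : ℝ) + 1 - j) := by
    intro j hj
    rw [coeff_derivative, show N - j + 1 = N + 1 - j by omega, hP_coeff j (by omega),
      Nat.cast_sub hj]
    ring
  have hD_deg : (derivative P).natDegree ≤ N := (natDegree_derivative_le P).trans (by omega)
  have hcard : card (derivative P).roots = N := by
    have hRolle := card_roots_le_derivative P
    rw [roots_multiset_prod_X_sub_C, hμ] at hRolle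
    exact le_antisymm ((card_roots' _).trans hD_deg) (by omega)
  have hD_deg' : (derivative P).natDegree = N := le_antisymm hD_deg (hcard ▸ card_roots' _)
  have hD_lead : (derivative P).leadingCoeff = N + 1 := by
    rw [leadingCoeff, hD_deg', ← Nat.sub_zero N, hD_coeff 0 (Nat.zero_le N)]
    simp [esymm, powersetCard_zero_left]
  refine ⟨(derivative P).roots, hcard, fun j hj => ?_⟩
  have hVieta := coeff_eq_esymm_roots_of_card (hcard.trans hD_deg'.symm)
    (hD_deg'.symm ▸ Nat.sub_le N j)
  rw [hD_deg', hD_coeff j hj, hD_lead, Nat.sub_sub_self hj] at hVieta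
  have hsign : ((-1 : ℝ) ^ j) ≠ 0 := pow_ne_zero _ (by norm_num)
  apply mul_left_cancel₀ hsign
  linear_combination -hVieta

noncomputable def normalizedEsymm (μ : Multiset ℝ) (j : ℕ) : ℝ := μ.esymm j / (card μ).choose j

theorem normalizedEsymm_pos {μ : Multiset ℝ} {j : ℕ} (h : 0 < μ.esymm j) :
    0 < normalizedEsymm μ j := by
  have hj : j ≤ card μ := by
    by_contra! hlt
    exact h.ne' (esymm_eq_zero_of_card_lt hlt)
  exact div_pos h (mod_cast Nat.choose_pos hj)

theorem exists_normalizedEsymm_eq {μ : Multiset ℝ} {N : ℕ} (hμ : card μ = N + 1) :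
    ∃ ν : Multiset ℝ, card ν = N ∧ ∀ j ≤ N, normalizedEsymm ν j = normalizedEsymm μ j := by
  obtain ⟨ν, hν, hesymm⟩ := exists_esymm_derivative_roots hμ
  refine ⟨ν, hν, fun j hj => ?_⟩
  have hchoose : (N.choose j : ℝ) * (N + 1) = (N + 1).choose j * ((N : ℝ) + 1 - j) := by
    have h := congrArg (Nat.cast (R := ℝ)) (Nat.choose_mul_succ_eq N j)
    push_cast [Nat.sub_add_comm hj, Nat.cast_sub hj] at h
    linear_combination h
  have hC : (N.choose j : ℝ) ≠ 0 := mod_cast (Nat.choose_pos hj).ne'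
  have hC' : ((N + 1).choose j : ℝ) ≠ 0 := mod_cast (Nat.choose_pos (by omega)).ne'
  have hr : (N : ℝ) + 1 - j ≠ 0 := by
    have : (j : ℝ) ≤ N := mod_cast hj
    linarith
  rw [normalizedEsymm, normalizedEsymm, hν, hμ, div_eq_div_iff hC hC']
  apply mul_right_cancel₀ hr
  linear_combination (-ν.esymm j) * hchoose + (N.choose j : ℝ) * hesymm j hj

theorem normalizedEsymm_mul_le_sq (μ : Multiset ℝ) {j : ℕ} (hj : j + 2 ≤ card μ) :
    normalizedEsymm μ j * normalizedEsymm μ (j + 2) ≤ normalizedEsymm μ (j + 1) ^ 2 := by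
  obtain ⟨d, hd⟩ := Nat.exists_eq_add_of_le hj
  induction d generalizing μ with
  | zero =>
    have hbase := Finset.two_mul_esymm_mul_esymm_le_sq μ.toEnumFinset Prod.fst
      (by rw [card_toEnumFinset, hd])
    rw [map_toEnumFinset_fst] at hbase
    have hchoose : ((j + 2).choose j : ℝ) = (j + 2) * (j + 1) / 2 := by
      rw [Nat.choose_symm_of_eq_add rfl, Nat.cast_choose_two]
      push_cast
      ring
    rw [normalizedEsymm, normalizedEsymm, normalizedEsymm, hd, add_zero, hchoose, Nat.choose_self,
      Nat.choose_succ_self_right]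
    push_cast
    field_simp
    linear_combination ((j : ℝ) + 2) * hbase
  | succ d ih =>
    obtain ⟨ν, hν, hnorm⟩ := exists_normalizedEsymm_eq (N := j + 2 + d) (by rw [hd]; ring)
    rw [← hnorm j (by omega), ← hnorm (j + 1) (by omega), ← hnorm (j + 2) (by omega)]
    exact ih ν (by omega) hν

theorem normalizedEsymm_mul_le_mul {μ : Multiset ℝ} {a b : ℕ} (hab : a ≤ b)
    (hpos : ∀ m ≤ b + 1, 0 < μ.esymm m) :
    normalizedEsymm μ (b + 1) * normalizedEsymm μ a
      ≤ normalizedEsymm μ b * normalizedEsymm μ (a + 1) := by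
  induction b, hab using Nat.le_induction with
  | base => exact (mul_comm _ _).le
  | succ b hab ih =>
    have ih' := ih fun m hm => hpos m (by omega)
    have hcard : b + 2 ≤ card μ := by
      by_contra! hlt
      exact (hpos (b + 2) le_rfl).ne' (esymm_eq_zero_of_card_lt hlt)
    have hnewton := normalizedEsymm_mul_le_sq μ hcard
    have hpa := normalizedEsymm_pos (hpos a (by omega))
    have hpb := normalizedEsymm_pos (hpos b (by omega))
    have hpb' := normalizedEsymm_pos (hpos (b + 1) (by omega))
    refine le_of_mul_le_mul_left ?_ hpb
    calc normalizedEsymm μ b * (normalizedEsymm μ (b + 1 + 1) * normalizedEsymm μ a)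
        = normalizedEsymm μ b * normalizedEsymm μ (b + 2) * normalizedEsymm μ a := by ring
      _ ≤ normalizedEsymm μ (b + 1) ^ 2 * normalizedEsymm μ a := by gcongr
      _ = normalizedEsymm μ (b + 1) * (normalizedEsymm μ (b + 1) * normalizedEsymm μ a) := by ring
      _ ≤ normalizedEsymm μ (b + 1) * (normalizedEsymm μ b * normalizedEsymm μ (a + 1)) := by gcongr
      _ = normalizedEsymm μ b * (normalizedEsymm μ (b + 1) * normalizedEsymm μ (a + 1)) := by ring

theorem esymm_mul_esymm_le {μ : Multiset ℝ} {a b : ℕ} (hab : a ≤ b)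
    (hpos : ∀ m ≤ b + 1, 0 < μ.esymm m) :
    (b + 1) * (card μ - a) * (μ.esymm (b + 1) * μ.esymm a)
      ≤ (a + 1) * (card μ - b) * (μ.esymm b * μ.esymm (a + 1)) := by
  set N := card μ
  have hbN : b + 1 ≤ N := by
    by_contra! hlt
    exact (hpos (b + 1) le_rfl).ne' (esymm_eq_zero_of_card_lt hlt)
  have hchoose : ∀ m < N, ((m : ℝ) + 1) * N.choose (m + 1) = (N - m) * N.choose m := by
    intro m hm
    have h := congrArg (Nat.cast (R := ℝ)) (Nat.choose_succ_right_eq N m)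
    push_cast [Nat.cast_sub hm.le] at h
    linear_combination h
  have hC : ∀ m ≤ N, (0 : ℝ) < N.choose m := fun m hm => mod_cast Nat.choose_pos hm
  have hchain := normalizedEsymm_mul_le_mul hab hpos
  simp only [normalizedEsymm] at hchain
  rw [div_mul_div_comm, div_mul_div_comm, div_le_div_iff₀ (mul_pos (hC _ hbN) (hC a (by omega)))
    (mul_pos (hC b (by omega)) (hC _ (by omega)))] at hchain
  have hfactor : (0 : ℝ) < N.choose b * N.choose a := mul_pos (hC b (by omega)) (hC a (by omega))
  refine le_of_mul_le_mul_right ?_ hfactor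
  calc (b + 1) * (N - a) * (μ.esymm (b + 1) * μ.esymm a) * (N.choose b * N.choose a)
      = (b + 1) * (a + 1) * (μ.esymm (b + 1) * μ.esymm a * (N.choose b * N.choose (a + 1))) := by
        linear_combination (-(b + 1) * (μ.esymm (b + 1) * μ.esymm a) * N.choose b : ℝ) *
          hchoose a (by omega)
    _ ≤ (b + 1) * (a + 1) * (μ.esymm b * μ.esymm (a + 1) * (N.choose (b + 1) * N.choose a)) := by
        gcongr
    _ = (a + 1) * (N - b) * (μ.esymm b * μ.esymm (a + 1)) * (N.choose b * N.choose a) := by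
        linear_combination ((a + 1) * (μ.esymm b * μ.esymm (a + 1)) * N.choose a : ℝ) *
          hchoose b (by omega)

end Multiset

theorem quadratic_nonneg_of_endpoints {a b c x y t : ℝ} (ha : a ≤ 0) (hxt : x ≤ t) (hty : t ≤ y)
    (hx : 0 ≤ a * x ^ 2 + b * x + c) (hy : 0 ≤ a * y ^ 2 + b * y + c) :
    0 ≤ a * t ^ 2 + b * t + c := by
  rcases hxt.eq_or_lt with rfl | hxt'
  · exact hx
  have hyx : 0 < y - x := by linarith
  refine le_of_mul_le_mul_left ?_ hyx
  have hconcave : 0 ≤ -a * ((t - x) * (y - t) * (y - x)) :=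
    mul_nonneg (neg_nonneg.2 ha) (by have := sub_nonneg.2 hty; positivity)
  linear_combination (y - t) * hx + (t - x) * hy + hconcave

/-- Here `aᵢ = σ_{l-i}(μ)`, `bᵢ = σ_{k-i}(μ)` and `t = λ₁`. The right side minus the left side is a
quadratic in `t`, concave by `h₂`, nonnegative at `t = 0` by `h₁` and at the root `t = -b₀ / b₁` of
`b₀ + t b₁ = σ_k(λ)`. -/
theorem mul_deriv_sum_le_of_newton {n k l t a₀ a₁ a₂ b₀ b₁ b₂ : ℝ} (hl : 0 ≤ l) (hlk : l < k)
    (hkn : k ≤ n)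
    (ha₀ : 0 ≤ a₀) (ha₁ : 0 ≤ a₁) (hb₁ : 0 < b₁) (hb₂ : 0 ≤ b₂) (ht : t ≤ 0)
    (hσ : 0 ≤ b₀ + t * b₁)
    (h₁ : k * (n - l) * (b₀ * a₁) ≤ l * (n - k) * (b₁ * a₀))
    (h₂ : (n - l + 1) * (b₁ * a₂) ≤ (n - k + 1) * (b₂ * a₁)) :
    n * (k - l) * ((n - k + 1) * ((b₁ + t * b₂) * (a₀ + t * a₁))
        - (n - l + 1) * ((b₀ + t * b₁) * (a₁ + t * a₂)))
      ≤ k * (n - l) * (n - k + 1) * (b₁ * a₀ - b₀ * a₁) := by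
  have hb₀ : 0 ≤ b₀ := by nlinarith
  have hnkl : 0 ≤ n * (k - l) := mul_nonneg (by linarith) (by linarith)
  have hD : 0 ≤ b₁ * a₀ - b₀ * a₁ := by
    have hkl : l * (n - k) ≤ k * (n - l) := by nlinarith
    have hpos : 0 < k * (n - l) := mul_pos (by linarith) (by linarith)
    refine sub_nonneg.2 (le_of_mul_le_mul_left (h₁.trans ?_) hpos)
    exact mul_le_mul_of_nonneg_right hkl (mul_nonneg hb₁.le ha₀)
  have hroot : -b₀ / b₁ ≤ t := by
    rw [div_le_iff₀ hb₁]
    linarith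
  have hq := quadratic_nonneg_of_endpoints (t := t) (y := 0)
    (a := -(n * (k - l)) * ((n - k + 1) * (b₂ * a₁) - (n - l + 1) * (b₁ * a₂)))
    (b := -(n * (k - l)) * ((n - k + 1) * (b₁ * a₁ + b₂ * a₀) - (n - l + 1) * (b₀ * a₂ + b₁ * a₁)))
    (c := k * (n - l) * (n - k + 1) * (b₁ * a₀ - b₀ * a₁)
      - n * (k - l) * ((n - k + 1) * (b₁ * a₀) - (n - l + 1) * (b₀ * a₁)))
    (mul_nonpos_of_nonpos_of_nonneg (neg_nonpos.2 hnkl) (sub_nonneg.2 h₂)) hroot ht ?_ ?_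
  · linear_combination hq
  · have hnk : 0 ≤ n - k + 1 := by linarith
    have hlnk : 0 ≤ l * (n - k) := mul_nonneg hl (by linarith)
    have hvalue : 0 ≤ (n - k + 1) * (b₁ * a₀ - b₀ * a₁)
        * (l * (n - k) * b₁ ^ 2 + n * (k - l) * (b₀ * b₂)) / b₁ ^ 2 := by
      positivity
    convert hvalue using 1
    field_simp
    ring
  · have hterm₁ : 0 ≤ (n - k + 1) * (l * (n - k) * (b₁ * a₀) - k * (n - l) * (b₀ * a₁)) :=
      mul_nonneg (by linarith) (sub_nonneg.2 h₁)
    have hterm₂ : 0 ≤ n * (k - l) * (n - l + 1) * (b₀ * a₁) :=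
      mul_nonneg (mul_nonneg hnkl (by linarith)) (mul_nonneg hb₀ ha₁)
    linear_combination hterm₁ + hterm₂

section

variable {n : ℕ} (lam : Fin n → ℝ)

theorem esymm_natCast (m : ℕ) : esymm lam m = (univ.val.map lam).esymm m := by
  rw [esymm, if_neg (Int.natCast_nonneg m).not_gt, Int.toNat_natCast, esymm_map_val]

theorem esymmDel_natCast (i : Fin n) (m : ℕ) :
    esymmDel lam i m = ((univ.erase i).val.map lam).esymm m := by
  rw [esymmDel, if_neg (Int.natCast_nonneg m).not_gt, Int.toNat_natCast, esymm_map_val]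

theorem esymm_of_neg {m : ℤ} (hm : m < 0) : esymm lam m = 0 := if_pos hm

theorem esymmDel_of_neg (i : Fin n) {m : ℤ} (hm : m < 0) : esymmDel lam i m = 0 := if_pos hm

theorem esymm_eq_esymmDel_add (i : Fin n) (m : ℤ) :
    esymm lam m = esymmDel lam i m + lam i * esymmDel lam i (m - 1) := by
  rcases lt_or_ge m 0 with hm | hm
  · rw [esymm_of_neg lam hm, esymmDel_of_neg lam i hm, esymmDel_of_neg lam i (by omega), mul_zero,
      add_zero]
  lift m to ℕ using hm
  cases m with
  | zero => simp [esymm, esymmDel]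
  | succ m =>
    rw [show ((m + 1 : ℕ) : ℤ) - 1 = m by push_cast; ring, esymm_natCast, esymmDel_natCast,
      esymmDel_natCast, map_val_eq_cons_map_erase (mem_univ i), Multiset.esymm_cons_succ]

theorem sum_esymmDel {m : ℤ} (hm : m ≤ n) : ∑ i, esymmDel lam i m = (n - m) * esymm lam m := by
  rcases lt_or_ge m 0 with hneg | hm₀
  · simp [esymmDel_of_neg lam _ hneg, esymm_of_neg lam hneg]
  lift m to ℕ using hm₀
  simp only [esymmDel_natCast, esymm_natCast]
  rw [sum_esymm_erase, card_univ, Fintype.card_fin, nsmul_eq_mul, Nat.cast_sub (by omega)]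
  push_cast
  ring

variable {lam}

theorem esymmDel_pos {k : ℕ} (hlam : lam ∈ GardingCone n k) {i : Fin n} (hi : lam i < 0) {m : ℕ}
    (hm : m ≤ k) : 0 < esymmDel lam i m := by
  induction m with
  | zero => simp [esymmDel]
  | succ m ih =>
    have hrec := esymm_eq_esymmDel_add lam i (m + 1 : ℕ)
    rw [show ((m + 1 : ℕ) : ℤ) - 1 = m by push_cast; ring] at hrec
    have := hlam (m + 1) (by omega) hm
    nlinarith [ih (by omega)]

theorem esymmDel_nonneg {k : ℕ} {i : Fin n} (hpos : ∀ m : ℕ, m ≤ k → 0 < esymmDel lam i m)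
    {m : ℤ} (hm : m ≤ k) : 0 ≤ esymmDel lam i m := by
  rcases lt_or_ge m 0 with hneg | hm₀
  · rw [esymmDel_of_neg lam i hneg]
  lift m to ℕ using hm₀
  exact (hpos m (by omega)).le

theorem esymmDel_newton {k l : ℕ} {i : Fin n} (hpos : ∀ m : ℕ, m ≤ k → 0 < esymmDel lam i m)
    (hlk : l < k) :
    k * (n - l) * (esymmDel lam i k * esymmDel lam i (l - 1))
      ≤ l * (n - k) * (esymmDel lam i (k - 1) * esymmDel lam i l) := by
  rcases l with _ | l
  · simp [esymmDel_of_neg]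
  obtain ⟨k, rfl⟩ : ∃ k', k = k' + 1 := ⟨k - 1, by omega⟩
  have hcard : (Multiset.card ((univ.erase i).val.map lam) : ℝ) = n - 1 := by
    rw [Multiset.card_map, card_val, card_erase_of_mem (mem_univ i), card_univ, Fintype.card_fin,
      Nat.cast_sub i.pos, Nat.cast_one]
  have h := Multiset.esymm_mul_esymm_le (μ := (univ.erase i).val.map lam) (a := l) (b := k)
    (by omega) fun m hm => by rw [← esymmDel_natCast]; exact hpos m hm
  simp only [← esymmDel_natCast, hcard] at h
  push_cast at h ⊢
  simp only [add_sub_cancel_right]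
  linear_combination h

theorem esymmDel_newton_pred {k l : ℕ} {i : Fin n} (hpos : ∀ m : ℕ, m ≤ k → 0 < esymmDel lam i m)
    (hlk : l < k) (hkn : k ≤ n) :
    (n - l + 1) * (esymmDel lam i (k - 1) * esymmDel lam i (l - 2))
      ≤ (n - k + 1) * (esymmDel lam i (k - 2) * esymmDel lam i (l - 1)) := by
  rcases l with _ | l
  · simp [esymmDel_of_neg]
  obtain ⟨k, rfl⟩ : ∃ k', k = k' + 1 := ⟨k - 1, by omega⟩
  have h := esymmDel_newton (k := k) (l := l) (fun m hm => hpos m (by omega)) (by omega)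
  have hslack : 0 ≤ (k - l) * (n - k) * (esymmDel lam i (k - 1) * esymmDel lam i l) := by
    have hlk' : (l : ℝ) ≤ k := by exact_mod_cast (show l ≤ k by omega)
    have hkn' : (k : ℝ) ≤ n := by exact_mod_cast (show k ≤ n by omega)
    exact mul_nonneg (mul_nonneg (by linarith) (by linarith))
      (mul_nonneg (esymmDel_nonneg hpos (by omega)) (esymmDel_nonneg hpos (by omega)))
  have hk : (0 : ℝ) < k := by exact_mod_cast (show 0 < k by omega)
  refine le_of_mul_le_mul_left ?_ hk
  push_cast
  rw [show (k : ℤ) + 1 - 1 = k by ring, show (l : ℤ) + 1 - 2 = l - 1 by ring,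
    show (k : ℤ) + 1 - 2 = k - 1 by ring, show (l : ℤ) + 1 - 1 = l by ring]
  linear_combination h + hslack

end

/-- Lemma 2.5, inequality (2.7): if 0 ≤ l < k ≤ n, λ ∈ Γ_k and λ₁ < 0, then
σ_{k−1}(λ|1)σ_l(λ) − σ_k(λ)σ_{l−1}(λ|1)
  ≥ (n/k)·((k−l)/(n−l))·(1/(n−k+1)) · Σᵢ [σ_{k−1}(λ|i)σ_l(λ) − σ_k(λ)σ_{l−1}(λ|i)],
i.e. ∂[σ_k/σ_l]/∂λ₁ ≥ (n/k)((k−l)/(n−l))(1/(n−k+1)) Σᵢ ∂[σ_k/σ_l]/∂λᵢ. -/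
theorem deriv_quotient_first_ge (n k l : ℕ) (hlk : l < k) (hkn : k ≤ n)
    (lam : Fin n → ℝ) (hlam : lam ∈ GardingCone n k)
    (hneg : lam ⟨0, by omega⟩ < 0) :
    esymmDel lam ⟨0, by omega⟩ ((k : ℤ) - 1) * esymm lam (l : ℤ)
      - esymm lam (k : ℤ) * esymmDel lam ⟨0, by omega⟩ ((l : ℤ) - 1)
    ≥ ((n : ℝ) / k) * (((k : ℝ) - l) / ((n : ℝ) - l)) * (1 / ((n : ℝ) - k + 1)) *
      ∑ i : Fin n, (esymmDel lam i ((k : ℤ) - 1) * esymm lam (l : ℤ)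
        - esymm lam (k : ℤ) * esymmDel lam i ((l : ℤ) - 1)) := by
  set i₀ : Fin n := ⟨0, by omega⟩
  have hpos : ∀ m : ℕ, m ≤ k → 0 < esymmDel lam i₀ m := fun m hm => esymmDel_pos hlam hneg hm
  have hσk := hlam k (by omega) le_rfl
  have hlk' : (l : ℝ) < k := by exact_mod_cast hlk
  have hkn' : (k : ℝ) ≤ n := by exact_mod_cast hkn
  have hb₁ : 0 < esymmDel lam i₀ ((k : ℤ) - 1) := by
    simpa [Nat.cast_sub (show 1 ≤ k by omega)] using hpos (k - 1) (by omega)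
  have key := mul_deriv_sum_le_of_newton (a₀ := esymmDel lam i₀ l) (a₁ := esymmDel lam i₀ (l - 1))
    (b₀ := esymmDel lam i₀ k) (b₂ := esymmDel lam i₀ (k - 2)) (Nat.cast_nonneg l) hlk' hkn'
    (esymmDel_nonneg hpos (by omega)) (esymmDel_nonneg hpos (by omega)) hb₁
    (esymmDel_nonneg hpos (by omega)) hneg.le
    (esymm_eq_esymmDel_add lam i₀ k ▸ hσk.le) (esymmDel_newton hpos hlk)
    (esymmDel_newton_pred hpos hlk hkn)
  rw [sum_sub_distrib, ← sum_mul, ← mul_sum, sum_esymmDel lam (by omega),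
    sum_esymmDel lam (by omega), esymm_eq_esymmDel_add lam i₀ k, esymm_eq_esymmDel_add lam i₀ l,
    esymm_eq_esymmDel_add lam i₀ (k - 1), esymm_eq_esymmDel_add lam i₀ (l - 1)]
  rw [show (k : ℤ) - 1 - 1 = k - 2 by ring, show (l : ℤ) - 1 - 1 = l - 2 by ring]
  push_cast
  have hden : (0 : ℝ) < k * (n - l) * (n - k + 1) :=
    mul_pos (mul_pos (by linarith [(Nat.cast_nonneg l : (0 : ℝ) ≤ l)]) (by linarith)) (by linarith)
  rw [ge_iff_le, div_mul_div_comm, div_mul_div_comm, mul_one, div_mul_eq_mul_div,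
    div_le_iff₀ hden]
  linear_combination key
end

section
/- Let n ≥ 3, 2 ≤ k ≤ n, and let λ = (λ_1, …, λ_n) ∈ Γ_k satisfy λ_2 ≥ λ_3 ≥ ⋯ ≥ λ_n, λ_1 > 0, λ_n < 0, λ_1 ≥ δλ_2 and −λ_n ≥ ελ_1 for some constants δ, ε ∈ (0,1]. Set c_0 = min{ ε²δ²/(2(n−2)(n−1)), ε²δ/(4(n−1)) }. Then σ_m(λ|1) ≥ c_0 · σ_m(λ) for every m = 0, 1, …, k−1. (Lemma 2.7, inequality (2.14).) -/
open Finset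

namespace Lem27

variable {n : ℕ}

noncomputable def eS (w : Fin n → ℝ) (S : Finset (Fin n)) (m : ℕ) : ℝ :=
  ∑ T ∈ Finset.powersetCard m (Finset.univ \ S), ∏ j ∈ T, w j

lemma eS_zero (w : Fin n → ℝ) (S : Finset (Fin n)) : eS w S 0 = 1 := by
  simp [eS]

lemma eS_eq_zero (w : Fin n → ℝ) {S : Finset (Fin n)} {m : ℕ}
    (h : (Finset.univ \ S : Finset (Fin n)).card < m) : eS w S m = 0 := by
  unfold eS
  rw [Finset.powersetCard_eq_empty.2 h, Finset.sum_empty]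

lemma eS_pos (w : Fin n → ℝ) {S : Finset (Fin n)} {m : ℕ}
    (hm : m ≤ (Finset.univ \ S : Finset (Fin n)).card)
    (hw : ∀ j ∈ Finset.univ \ S, 0 < w j) : 0 < eS w S m := by
  apply Finset.sum_pos
  · intro T hT
    rw [Finset.mem_powersetCard] at hT
    exact Finset.prod_pos (fun j hj => hw j (hT.1 hj))
  · exact Finset.powersetCard_nonempty.2 hm

lemma filter_notMem_eq (S : Finset (Fin n)) {i : Fin n} (m : ℕ) :
    ((Finset.powersetCard m (Finset.univ \ S)).filter (fun U => i ∉ U))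
      = Finset.powersetCard m (Finset.univ \ insert i S) := by
  ext U
  simp only [Finset.mem_filter, Finset.mem_powersetCard, Finset.sdiff_insert,
    Finset.subset_erase]
  tauto

lemma sum_mem_filter (w : Fin n → ℝ) {S : Finset (Fin n)} {i : Fin n}
    (hi : i ∈ Finset.univ \ S) (m : ℕ) :
    ∑ U ∈ (Finset.powersetCard (m+1) (Finset.univ \ S)).filter (fun U => i ∈ U),
        ∏ j ∈ U, w j
      = w i * eS w (insert i S) m := by
  rw [eS, Finset.mul_sum]
  refine Finset.sum_bij' (fun U _ => U.erase i) (fun V _ => insert i V) ?_ ?_ ?_ ?_ ?_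
  · intro U hU
    simp only [Finset.mem_filter, Finset.mem_powersetCard] at hU
    simp only [Finset.mem_powersetCard, Finset.sdiff_insert]
    constructor
    · exact Finset.erase_subset_erase _ hU.1.1
    · rw [Finset.card_erase_of_mem hU.2, hU.1.2]; rfl
  · intro V hV
    simp only [Finset.mem_powersetCard, Finset.sdiff_insert, Finset.subset_erase] at hV
    simp only [Finset.mem_filter, Finset.mem_powersetCard]
    refine ⟨⟨?_, ?_⟩, Finset.mem_insert_self i V⟩
    · intro x hx
      rcases Finset.mem_insert.1 hx with rfl | hx
      · exact hi
      · exact hV.1.1 hx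
    · rw [Finset.card_insert_of_notMem hV.1.2, hV.2]
  · intro U hU
    simp only [Finset.mem_filter] at hU
    exact Finset.insert_erase hU.2
  · intro V hV
    simp only [Finset.mem_powersetCard, Finset.sdiff_insert, Finset.subset_erase] at hV
    exact Finset.erase_insert hV.1.2
  · intro U hU
    simp only [Finset.mem_filter] at hU
    exact (Finset.mul_prod_erase _ _ hU.2).symm

/-- expansion along one index: σ_{m+1}(w|S) = σ_{m+1}(w|S∪i) + w_i σ_m(w|S∪i). -/
lemma eS_succ (w : Fin n → ℝ) {S : Finset (Fin n)} {i : Fin n}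
    (hi : i ∈ Finset.univ \ S) (m : ℕ) :
    eS w S (m+1) = eS w (insert i S) (m+1) + w i * eS w (insert i S) m := by
  rw [eS, ← Finset.sum_filter_add_sum_filter_not
    (Finset.powersetCard (m+1) (Finset.univ \ S)) (fun U => i ∈ U)]
  rw [sum_mem_filter w hi m, filter_notMem_eq S (m+1)]
  rw [eS, eS, add_comm]


/-- Σ_{i ∉ S} w i · σ_m(w | S∪i) = (m+1) σ_{m+1}(w|S). -/
lemma sum_w_eS (w : Fin n → ℝ) (S : Finset (Fin n)) (m : ℕ) :
    ∑ i ∈ Finset.univ \ S, w i * eS w (insert i S) m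
      = ((m : ℝ) + 1) * eS w S (m+1) := by
  have h1 : ∀ i ∈ Finset.univ \ S, w i * eS w (insert i S) m
      = ∑ U ∈ (Finset.powersetCard (m+1) (Finset.univ \ S)).filter (fun U => i ∈ U),
          ∏ j ∈ U, w j := fun i hi => (sum_mem_filter w hi m).symm
  rw [Finset.sum_congr rfl h1]
  rw [Finset.sum_comm' (t' := Finset.powersetCard (m+1) (Finset.univ \ S))
    (s' := fun U => U) (f := fun _ U => ∏ j ∈ U, w j)
    (by
      intro i U
      simp only [Finset.mem_filter, Finset.mem_powersetCard]
      constructor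
      · rintro ⟨hi, ⟨hU, hc⟩, hiU⟩; exact ⟨hiU, hU, hc⟩
      · rintro ⟨hiU, hU, hc⟩; exact ⟨hU hiU, ⟨hU, hc⟩, hiU⟩)]
  rw [eS, Finset.mul_sum]
  refine Finset.sum_congr rfl ?_
  intro U hU
  rw [Finset.mem_powersetCard] at hU
  rw [Finset.sum_const, hU.2, nsmul_eq_mul]
  push_cast
  ring

/-- Identity A: σ₁-restricted times σ_{q+1} = (q+2)σ_{q+2} + Σ wᵢ² σ_q(w|S∪i). -/
lemma idA (w : Fin n → ℝ) (S : Finset (Fin n)) (q : ℕ) :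
    (∑ i ∈ Finset.univ \ S, w i) * eS w S (q+1)
      = ((q : ℝ) + 2) * eS w S (q+2)
        + ∑ i ∈ Finset.univ \ S, (w i)^2 * eS w (insert i S) q := by
  have h1 : ∀ i ∈ Finset.univ \ S, w i * eS w S (q+1)
      = w i * eS w (insert i S) (q+1) + (w i)^2 * eS w (insert i S) q := by
    intro i hi
    rw [eS_succ w hi q]
    ring
  rw [Finset.sum_mul, Finset.sum_congr rfl h1, Finset.sum_add_distrib]
  have h2 := sum_w_eS w S (q+1)
  rw [h2]
  push_cast
  ring


lemma card_filter_supersets {A T : Finset (Fin n)} {m : ℕ} (hTA : T ⊆ A) (hc : T.card ≤ m) :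
    ((Finset.powersetCard m A).filter (fun U => T ⊆ U)).card
      = (A.card - T.card).choose (m - T.card) := by
  have hcs : (A \ T).card = A.card - T.card := Finset.card_sdiff_of_subset hTA
  rw [← hcs, ← Finset.card_powersetCard (m - T.card) (A \ T)]
  refine Finset.card_bij' (fun U _ => U \ T) (fun V _ => V ∪ T) ?_ ?_ ?_ ?_
  · intro U hU
    simp only [Finset.mem_filter, Finset.mem_powersetCard] at hU
    simp only [Finset.mem_powersetCard]
    exact ⟨Finset.sdiff_subset_sdiff hU.1.1 (le_refl _),
      by rw [Finset.card_sdiff_of_subset hU.2, hU.1.2]⟩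
  · intro V hV
    simp only [Finset.mem_powersetCard] at hV
    simp only [Finset.mem_filter, Finset.mem_powersetCard]
    have hVT : Disjoint V T := Finset.disjoint_left.2 (fun a haV haT =>
      (Finset.mem_sdiff.1 (hV.1 haV)).2 haT)
    refine ⟨⟨?_, ?_⟩, Finset.subset_union_right⟩
    · intro x hx
      rcases Finset.mem_union.1 hx with hx | hx
      · exact (Finset.sdiff_subset) (hV.1 hx)
      · exact hTA hx
    · rw [Finset.card_union_of_disjoint hVT, hV.2]
      omega
  · intro U hU
    simp only [Finset.mem_filter] at hU
    exact Finset.sdiff_union_of_subset hU.2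
  · intro V hV
    simp only [Finset.mem_powersetCard] at hV
    have hVT : Disjoint V T := Finset.disjoint_left.2 (fun a haV haT =>
      (Finset.mem_sdiff.1 (hV.1 haV)).2 haT)
    show (V ∪ T) \ T = V
    rw [Finset.union_sdiff_right]
    exact Finset.sdiff_eq_self_of_disjoint hVT


lemma eS_shift (w : Fin n → ℝ) (S : Finset (Fin n)) (m : ℕ) (t : ℝ) :
    eS (fun j => w j + t) S m
      = ∑ c ∈ Finset.range (m+1),
          ((((Finset.univ \ S : Finset (Fin n)).card - c).choose (m - c) : ℝ)
            * eS w S c * t^(m-c)) := by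
  set A : Finset (Fin n) := Finset.univ \ S with hA
  have step1 : eS (fun j => w j + t) S m
      = ∑ U ∈ Finset.powersetCard m A,
          ∑ T ∈ A.powerset.filter (fun T => T ⊆ U), (∏ j ∈ T, w j) * t^(m - T.card) := by
    unfold eS
    refine Finset.sum_congr rfl ?_
    intro U hU
    rw [Finset.mem_powersetCard] at hU
    rw [Finset.prod_add]
    have hset : U.powerset = A.powerset.filter (fun T => T ⊆ U) := by
      ext T
      simp only [Finset.mem_powerset, Finset.mem_filter]
      exact ⟨fun h => ⟨h.trans hU.1, h⟩, fun h => h.2⟩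
    rw [← hset]
    refine Finset.sum_congr rfl ?_
    intro T hT
    rw [Finset.mem_powerset] at hT
    rw [Finset.prod_const, Finset.card_sdiff_of_subset hT, hU.2]
  rw [step1]
  rw [Finset.sum_comm' (t' := A.powerset)
      (s' := fun T => (Finset.powersetCard m A).filter (fun U => T ⊆ U))
      (f := fun _ T => (∏ j ∈ T, w j) * t^(m - T.card))
      (by
        intro U T
        simp only [Finset.mem_filter]
        tauto)]
  have step3 : ∀ T ∈ A.powerset,
      (∑ _U ∈ (Finset.powersetCard m A).filter (fun U => T ⊆ U),
          (∏ j ∈ T, w j) * t^(m - T.card))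
        = (((Finset.powersetCard m A).filter (fun U => T ⊆ U)).card : ℝ)
            * ((∏ j ∈ T, w j) * t^(m - T.card)) := by
    intro T _
    rw [Finset.sum_const, nsmul_eq_mul]
  rw [Finset.sum_congr rfl step3]
  rw [Finset.sum_powerset]
  have step4 : ∀ c ∈ Finset.range (A.card + 1),
      (∑ T ∈ Finset.powersetCard c A,
          (((Finset.powersetCard m A).filter (fun U => T ⊆ U)).card : ℝ)
            * ((∏ j ∈ T, w j) * t^(m - T.card)))
        = (if c ≤ m then (((A.card - c).choose (m - c) : ℝ) * eS w S c * t^(m-c)) else 0) := by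
    intro c _
    by_cases hcm : c ≤ m
    · rw [if_pos hcm]
      rw [eS, ← hA, Finset.mul_sum, Finset.sum_mul]
      refine Finset.sum_congr rfl ?_
      intro T hT
      rw [Finset.mem_powersetCard] at hT
      rw [card_filter_supersets hT.1 (by rw [hT.2]; exact hcm), hT.2]
      ring
    · rw [if_neg hcm]
      refine Finset.sum_eq_zero ?_
      intro T hT
      rw [Finset.mem_powersetCard] at hT
      have : (Finset.powersetCard m A).filter (fun U => T ⊆ U) = ∅ := by
        refine Finset.filter_eq_empty_iff.2 ?_
        intro U hU hTU
        rw [Finset.mem_powersetCard] at hU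
        have := Finset.card_le_card hTU
        omega
      rw [this]
      simp
  rw [Finset.sum_congr rfl step4]
  -- re-range
  rw [← Finset.sum_filter]
  have hrange : (Finset.range (A.card + 1)).filter (fun c => c ≤ m)
      = Finset.range (min A.card m + 1) := by
    ext c
    simp only [Finset.mem_filter, Finset.mem_range]
    omega
  rw [hrange]
  refine Finset.sum_subset (Finset.range_subset_range.2 (by omega)) ?_
  intro c hc1 hc2
  simp only [Finset.mem_range] at hc1 hc2
  have hAc : A.card < c := by omega
  rw [eS_eq_zero w (show (Finset.univ \ S : Finset (Fin n)).card < c from by rw [← hA]; exact hAc)]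
  ring

lemma eS_shift_ge (w : Fin n → ℝ) (S : Finset (Fin n)) {m : ℕ} {t : ℝ} (ht : 0 ≤ t)
    (h : ∀ c < m, 0 ≤ eS w S c) :
    eS w S m ≤ eS (fun j => w j + t) S m := by
  rw [eS_shift, Finset.sum_range_succ]
  have hlast : ((((Finset.univ \ S : Finset (Fin n)).card - m).choose (m - m) : ℝ)
      * eS w S m * t^(m-m)) = eS w S m := by
    simp
  rw [hlast]
  have : 0 ≤ ∑ c ∈ Finset.range m,
      ((((Finset.univ \ S : Finset (Fin n)).card - c).choose (m - c) : ℝ)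
        * eS w S c * t^(m-c)) := by
    refine Finset.sum_nonneg ?_
    intro c hc
    rw [Finset.mem_range] at hc
    have := h c hc
    positivity
  linarith

lemma eS_shift_gt (w : Fin n → ℝ) (S : Finset (Fin n)) {m : ℕ} {t : ℝ} (ht : 0 < t)
    (hcard : m + 1 ≤ (Finset.univ \ S : Finset (Fin n)).card)
    (h : ∀ c < m + 1, 0 ≤ eS w S c) (h1 : 0 < eS w S m) :
    eS w S (m+1) < eS (fun j => w j + t) S (m+1) := by
  rw [eS_shift, Finset.sum_range_succ, Finset.sum_range_succ]
  have hlast : ((((Finset.univ \ S : Finset (Fin n)).card - (m+1)).choose ((m+1) - (m+1)) : ℝ)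
      * eS w S (m+1) * t^((m+1)-(m+1))) = eS w S (m+1) := by
    simp
  rw [hlast]
  have hm1 : ((((Finset.univ \ S : Finset (Fin n)).card - m).choose ((m+1) - m) : ℝ)
      * eS w S m * t^((m+1)-m)) > 0 := by
    have h2 : (m+1) - m = 1 := by omega
    rw [h2, pow_one]
    have h3 : 0 < ((Finset.univ \ S : Finset (Fin n)).card - m).choose 1 := by
      rw [Nat.choose_one_right]
      omega
    have h4 : (0:ℝ) < (((Finset.univ \ S : Finset (Fin n)).card - m).choose 1 : ℝ) := by
      exact_mod_cast h3
    positivity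
  have hrest : 0 ≤ ∑ c ∈ Finset.range m,
      ((((Finset.univ \ S : Finset (Fin n)).card - c).choose ((m+1) - c) : ℝ)
        * eS w S c * t^((m+1)-c)) := by
    refine Finset.sum_nonneg ?_
    intro c hc
    rw [Finset.mem_range] at hc
    have := h c (by omega)
    positivity
  linarith

lemma eS_shift_cont (w : Fin n → ℝ) (S : Finset (Fin n)) (m : ℕ) :
    Continuous (fun t : ℝ => eS (fun j => w j + t) S m) := by
  unfold eS
  apply continuous_finset_sum
  intro T _
  apply continuous_finset_prod
  intro j _
  exact continuous_const.add continuous_id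


theorem DT : ∀ (k : ℕ) (w : Fin n → ℝ) (S : Finset (Fin n)),
    (∀ j, 1 ≤ j → j ≤ k → 0 < eS w S j) →
    ∀ i ∈ Finset.univ \ S, ∀ j, j ≤ k - 1 → 0 < eS w (insert i S) j := by
  intro k
  induction k using Nat.strong_induction_on with
  | _ k IH =>
  intro w S hw i hi j hj
  rcases Nat.eq_zero_or_pos j with rfl | hj1
  · rw [eS_zero]; norm_num
  have hk2 : 2 ≤ k := by omega
  by_cases hcase : j ≤ k - 2
  · exact IH (k-1) (by omega) w S (fun j' h1 h2 => hw j' h1 (by omega)) i hi j (by omega)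
  have hjk : j = k - 1 := by omega
  obtain ⟨K, rfl⟩ : ∃ K, k = K + 2 := ⟨k - 2, by omega⟩
  have hjK : j = K + 1 := by omega
  subst hjK
  by_contra hcon
  push_neg at hcon
  set S' := insert i S with hS'
  have hcardS : K + 2 ≤ (Finset.univ \ S : Finset (Fin n)).card := by
    by_contra hlt
    push_neg at hlt
    have h1 := eS_eq_zero w (show (Finset.univ \ S : Finset (Fin n)).card < K+2 by omega)
    have h2 := hw (K+2) (by omega) (le_refl _)
    linarith
  have hcardS' : (Finset.univ \ S' : Finset (Fin n)).card
      = (Finset.univ \ S : Finset (Fin n)).card - 1 := by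
    rw [hS', Finset.sdiff_insert, Finset.card_erase_of_mem hi]
  have hcardS'' : K + 1 ≤ (Finset.univ \ S' : Finset (Fin n)).card := by omega
  set F : ℝ → ℝ := fun t => eS (fun x => w x + t) S' (K+1) with hF
  have hFcont : Continuous F := eS_shift_cont w S' (K+1)
  set T0 : ℝ := 1 + ∑ x : Fin n, |w x| with hT0
  have hT0pos : (0:ℝ) ≤ T0 := by
    rw [hT0]
    have : (0:ℝ) ≤ ∑ x : Fin n, |w x| := Finset.sum_nonneg (fun _ _ => abs_nonneg _)
    linarith
  have hFT0 : 0 < F T0 := by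
    refine eS_pos _ hcardS'' ?_
    intro x _
    have h1 : |w x| ≤ ∑ y : Fin n, |w y| :=
      Finset.single_le_sum (f := fun y => |w y|) (fun _ _ => abs_nonneg _) (Finset.mem_univ x)
    have h2 : -|w x| ≤ w x := neg_abs_le _
    rw [hT0]
    linarith
  have hF0 : F 0 ≤ 0 := by
    have heq : F 0 = eS w S' (K+1) := by
      rw [hF]
      simp only [add_zero]
    rw [heq]
    exact hcon
  obtain ⟨t0, ht0mem, ht0⟩ : ∃ t0 ∈ Set.Icc (0:ℝ) T0, F t0 = 0 := by
    have him := intermediate_value_Icc hT0pos hFcont.continuousOn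
    have h0 : (0:ℝ) ∈ Set.Icc (F 0) (F T0) := ⟨hF0, le_of_lt hFT0⟩
    obtain ⟨t0, ht0, h⟩ := him h0
    exact ⟨t0, ht0, h⟩
  have ht0nonneg : (0:ℝ) ≤ t0 := ht0mem.1
  set v : Fin n → ℝ := fun x => w x + t0 with hv
  have hwnn : ∀ c, c ≤ K + 2 → 0 ≤ eS w S c := by
    intro c hc
    rcases Nat.eq_zero_or_pos c with rfl | hc1
    · rw [eS_zero]; norm_num
    · exact le_of_lt (hw c hc1 hc)
  have hv1 : ∀ j', 1 ≤ j' → j' ≤ K + 2 → 0 < eS v S j' := by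
    intro j' h1 h2
    have hge := eS_shift_ge w S ht0nonneg (m := j') (fun c hc => hwnn c (by omega))
    have := hw j' h1 h2
    calc (0:ℝ) < eS w S j' := this
      _ ≤ eS v S j' := hge
  have hv2 : ∀ j', j' ≤ K → 0 < eS v S' j' := by
    intro j' hj'
    exact IH (K+1) (by omega) v S (fun j'' h1 h2 => hv1 j'' h1 (by omega)) i hi j' (by omega)
  have hv3 : eS v S' (K+1) = 0 := ht0
  have hv4 : 0 < eS v S' (K+2) := by
    have hexp := eS_succ v hi (K+1)
    rw [← hS'] at hexp
    rw [hv3, mul_zero, add_zero] at hexp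
    rw [← hexp]
    exact hv1 (K+2) (by omega) (le_refl _)
  have hv6 : ∀ c, c ≤ K + 1 → 0 ≤ eS v S' c := by
    intro c hc
    rcases Nat.eq_zero_or_pos c with rfl | hc1
    · rw [eS_zero]; norm_num
    rcases Nat.lt_or_ge c (K+1) with hlt | hge
    · exact le_of_lt (hv2 c (by omega))
    · have : c = K + 1 := by omega
      rw [this, hv3]
  have hv5 : ∀ i' ∈ Finset.univ \ S', ∀ j', j' ≤ K → 0 ≤ eS v (insert i' S') j' := by
    intro i' hi' j' hjle
    have key : ∀ u : ℝ, 0 < u → 0 < eS (fun x => v x + u) (insert i' S') j' := by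
      intro u hu
      refine IH (K+1) (by omega) (fun x => v x + u) S' ?_ i' hi' j' (by omega)
      intro j'' h1 h2
      rcases Nat.lt_or_ge j'' (K+1) with hlt | hge
      · have hge2 := eS_shift_ge v S' (le_of_lt hu) (m := j'') (fun c hc => hv6 c (by omega))
        have := hv2 j'' (by omega)
        linarith
      · have hj'' : j'' = K + 1 := by omega
        subst hj''
        have hgt := eS_shift_gt v S' hu (m := K) hcardS''
          (fun c hc => hv6 c (by omega)) (hv2 K (le_refl _))
        rw [hv3] at hgt
        exact hgt
    have hcont : Continuous (fun u : ℝ => eS (fun x => v x + u) (insert i' S') j') :=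
      eS_shift_cont v (insert i' S') j'
    have htend : Filter.Tendsto (fun u : ℝ => eS (fun x => v x + u) (insert i' S') j')
        (nhdsWithin 0 (Set.Ioi 0)) (nhds (eS v (insert i' S') j')) := by
      have h0 : eS (fun x => v x + (0:ℝ)) (insert i' S') j' = eS v (insert i' S') j' := by
        simp only [add_zero]
      have := (hcont.tendsto 0).mono_left (nhdsWithin_le_nhds (s := Set.Ioi (0:ℝ)))
      rw [h0] at this
      exact this
    refine ge_of_tendsto htend ?_
    filter_upwards [self_mem_nhdsWithin] with u hu
    exact le_of_lt (key u hu)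
  -- final contradiction via idA and s → 0+
  set G : ℝ → ℝ := fun s =>
    (∑ i' ∈ Finset.univ \ S', (v i' + s)) * eS (fun x => v x + s) S' (K+1)
      - ((K:ℝ) + 2) * eS (fun x => v x + s) S' (K+2) with hG
  have hGcont : Continuous G := by
    refine Continuous.sub ?_ ?_
    · exact (continuous_finset_sum _ (fun i' _ => continuous_const.add continuous_id)).mul
        (eS_shift_cont v S' (K+1))
    · exact continuous_const.mul (eS_shift_cont v S' (K+2))
  have hGnonneg : ∀ s : ℝ, 0 < s → 0 ≤ G s := by
    intro s hs
    have hid := idA (fun x => v x + s) S' K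
    have hsum : 0 ≤ ∑ i' ∈ Finset.univ \ S',
        ((fun x => v x + s) i')^2 * eS (fun x => v x + s) (insert i' S') K := by
      refine Finset.sum_nonneg ?_
      intro i' hi'
      have h1 : 0 ≤ eS (fun x => v x + s) (insert i' S') K := by
        have hstep := eS_shift_ge v (insert i' S') (le_of_lt hs) (m := K)
          (fun c hc => hv5 i' hi' c (by omega))
        have := hv5 i' hi' K (le_refl _)
        linarith
      positivity
    rw [hG]
    simp only []
    linarith [hid]
  have hG0 : 0 ≤ G 0 := by
    have htend : Filter.Tendsto G (nhdsWithin 0 (Set.Ioi 0)) (nhds (G 0)) :=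
      (hGcont.tendsto 0).mono_left (nhdsWithin_le_nhds (s := Set.Ioi (0:ℝ)))
    refine ge_of_tendsto htend ?_
    filter_upwards [self_mem_nhdsWithin] with u hu
    exact hGnonneg u hu
  have hG0' : G 0 = -(((K:ℝ) + 2) * eS v S' (K+2)) := by
    rw [hG]
    simp only [add_zero]
    rw [hv3]
    ring
  rw [hG0'] at hG0
  have : ((K:ℝ) + 2) * eS v S' (K+2) > 0 := by positivity
  linarith


lemma esymm_eq_eS (lam : Fin n → ℝ) (m : ℕ) : esymm lam (m : ℤ) = eS lam ∅ m := by
  unfold esymm eS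
  rw [if_neg (by exact_mod_cast Int.not_lt.2 (Int.ofNat_nonneg m))]
  rw [Int.toNat_natCast, Finset.sdiff_empty]

lemma esymmDel_eq_eS (lam : Fin n → ℝ) (i : Fin n) (m : ℕ) :
    esymmDel lam i (m : ℤ) = eS lam {i} m := by
  unfold esymmDel eS
  rw [if_neg (by exact_mod_cast Int.not_lt.2 (Int.ofNat_nonneg m))]
  rw [Int.toNat_natCast, Finset.erase_eq]

end Lem27

open Lem27 in
set_option maxHeartbeats 1600000 in
/-- Lemma 2.7, inequality (2.14): if n ≥ 3, 2 ≤ k ≤ n, λ ∈ Γ_k with λ₂ ≥ ⋯ ≥ λₙ,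
λ₁ > 0, λₙ < 0, λ₁ ≥ δλ₂ and −λₙ ≥ ελ₁ for δ, ε ∈ (0,1], and
c₀ = min{ε²δ²/(2(n−2)(n−1)), ε²δ/(4(n−1))}, then σ_m(λ|1) ≥ c₀·σ_m(λ) for all
m = 0, 1, …, k−1. -/
theorem esymmDel_ge_c0_esymm (n k : ℕ) (hn : 3 ≤ n) (hk2 : 2 ≤ k) (hkn : k ≤ n)
    (lam : Fin n → ℝ) (δ ε : ℝ) (hδ0 : 0 < δ) (hδ1 : δ ≤ 1) (hε0 : 0 < ε) (hε1 : ε ≤ 1)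
    (hlam : lam ∈ GardingCone n k)
    (hsort : ∀ i j : Fin n, 1 ≤ (i : ℕ) → i ≤ j → lam j ≤ lam i)
    (h1pos : 0 < lam ⟨0, by omega⟩)
    (hnneg : lam ⟨n - 1, by omega⟩ < 0)
    (hδlam : lam ⟨0, by omega⟩ ≥ δ * lam ⟨1, by omega⟩)
    (hεlam : -lam ⟨n - 1, by omega⟩ ≥ ε * lam ⟨0, by omega⟩) :
    ∀ m : ℕ, m ≤ k - 1 →
      esymmDel lam ⟨0, by omega⟩ (m : ℤ)
        ≥ min (ε ^ 2 * δ ^ 2 / (2 * ((n : ℝ) - 2) * ((n : ℝ) - 1)))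
            (ε ^ 2 * δ / (4 * ((n : ℝ) - 1))) * esymm lam (m : ℤ) := by
  intro m hm
  have hi0lt : 0 < n := by omega
  have hi1lt : 1 < n := by omega
  have hillt : n - 1 < n := by omega
  set i0 : Fin n := ⟨0, hi0lt⟩ with hi0def
  set i1 : Fin n := ⟨1, hi1lt⟩ with hi1def
  set il : Fin n := ⟨n - 1, hillt⟩ with hildef
  have hL : 0 < lam i0 := h1pos
  have hilneg : lam il < 0 := hnneg
  have hδlam' : lam i0 ≥ δ * lam i1 := hδlam
  have hεlam' : -lam il ≥ ε * lam i0 := hεlam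
  set L := lam i0 with hLdef
  set β := -lam il with hβdef
  set lam2 := lam i1 with hlam2def
  set c1 : ℝ := ε ^ 2 * δ ^ 2 / (2 * ((n : ℝ) - 2) * ((n : ℝ) - 1)) with hc1def
  set c2 : ℝ := ε ^ 2 * δ / (4 * ((n : ℝ) - 1)) with hc2def
  have hn1 : (2:ℝ) ≤ (n:ℝ) - 1 := by
    have : (3:ℝ) ≤ (n:ℝ) := by exact_mod_cast hn
    linarith
  have hn2 : (1:ℝ) ≤ (n:ℝ) - 2 := by
    have : (3:ℝ) ≤ (n:ℝ) := by exact_mod_cast hn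
    linarith
  have hc1pos : 0 < c1 := by
    rw [hc1def]; positivity
  have hc2pos : 0 < c2 := by
    rw [hc2def]
    have h4 : 0 < 4 * ((n:ℝ) - 1) := by linarith
    positivity
  have hc0le : min c1 c2 ≤ c2 := min_le_right _ _
  have hc0nonneg : 0 ≤ min c1 c2 := le_min (le_of_lt hc1pos) (le_of_lt hc2pos)
  have hc2le : c2 ≤ 1/8 := by
    rw [hc2def, div_le_iff₀ (by linarith)]
    nlinarith [sq_nonneg ε, hε0, hε1, hδ0, hδ1]
  have hG : ∀ j : ℕ, 1 ≤ j → j ≤ k → 0 < eS lam ∅ j := by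
    intro j h1 h2
    have := hlam j h1 h2
    rwa [esymm_eq_eS] at this
  rcases Nat.eq_zero_or_pos m with rfl | hm1
  · rw [esymmDel_eq_eS, esymm_eq_eS, eS_zero, eS_zero, mul_one]
    linarith [hc0le, hc2le]
  obtain ⟨m', rfl⟩ : ∃ m', m = m' + 1 := ⟨m - 1, by omega⟩
  have hm2k : m' + 2 ≤ k := by omega
  have hi0mem : i0 ∈ Finset.univ \ (∅ : Finset (Fin n)) := by simp
  have hil0 : il ≠ i0 := by
    intro h
    have h2 : n - 1 = 0 := congrArg Fin.val h
    omega
  have hilmem : il ∈ Finset.univ \ ({i0} : Finset (Fin n)) := by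
    simp [Finset.mem_sdiff, hil0]
  have hinsert0 : (insert i0 (∅ : Finset (Fin n))) = {i0} := rfl
  have hP1 : ∀ j, j ≤ m' + 1 → 0 < eS lam {i0} j := by
    intro j hj
    have := DT (m'+2) lam ∅ (fun j' h1 h2 => hG j' h1 (by omega)) i0 hi0mem j (by omega)
    rwa [hinsert0] at this
  have hP2 : ∀ i ∈ Finset.univ \ ({i0} : Finset (Fin n)), ∀ j, j ≤ m' →
      0 < eS lam (insert i {i0}) j := by
    intro i hi j hj
    exact DT (m'+1) lam {i0} (fun j' h1 h2 => hP1 j' (by omega)) i hi j (by omega)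
  set Xm := eS lam {i0} (m'+1) with hXmdef
  set Xm1 := eS lam {i0} m' with hXm1def
  set Y := eS lam (insert il {i0}) m' with hYdef
  set E2 := eS lam {i0} (m'+2) with hE2def
  have hXm : 0 < Xm := hP1 _ (le_refl _)
  have hXm1 : 0 < Xm1 := hP1 _ (by omega)
  have hY : 0 < Y := hP2 il hilmem m' (le_refl _)
  have hβpos : 0 < β := by rw [hβdef]; linarith
  have hβεL : ε * L ≤ β := hεlam'
  -- identity A and the key inequality
  have hid := idA lam {i0} m'
  have hterm : β^2 * Y ≤ ∑ i ∈ Finset.univ \ ({i0} : Finset (Fin n)),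
      (lam i)^2 * eS lam (insert i {i0}) m' := by
    have heq : β^2 * Y = (lam il)^2 * eS lam (insert il {i0}) m' := by
      rw [hβdef, hYdef]; ring
    rw [heq]
    refine Finset.single_le_sum (f := fun i => (lam i)^2 * eS lam (insert i {i0}) m') ?_ hilmem
    intro i hi
    have := hP2 i hi m' (le_refl _)
    positivity
  have hP5 : -L * Xm < E2 := by
    have hexp := eS_succ lam hi0mem (m'+1)
    rw [hinsert0] at hexp
    have hpos := hG (m'+2) (by omega) hm2k
    rw [hexp] at hpos
    rw [hE2def, hXmdef, hLdef]
    linarith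
  set S1 := ∑ i ∈ Finset.univ \ ({i0} : Finset (Fin n)), lam i with hS1def
  have hkey : β^2 * Y ≤ (S1 + ((m':ℝ) + 2) * L) * Xm := by
    have hE2' : ((m':ℝ) + 2) * (-L * Xm) ≤ ((m':ℝ) + 2) * E2 := by
      apply mul_le_mul_of_nonneg_left (le_of_lt hP5)
      positivity
    have hexpand : (S1 + ((m':ℝ) + 2) * L) * Xm
        = S1 * Xm + ((m':ℝ) + 2) * L * Xm := by ring
    have hneg : ((m':ℝ) + 2) * (-L * Xm) = -(((m':ℝ) + 2) * L * Xm) := by ring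
    rw [hexpand]
    rw [hS1def]
    linarith [hid, hterm, hE2', hneg.symm.le]
  -- bound on S1
  have hcardA : (Finset.univ \ ({i0} : Finset (Fin n))).card = n - 1 := by
    rw [Finset.card_sdiff_of_subset (Finset.singleton_subset_iff.2 (Finset.mem_univ i0))]
    rw [Finset.card_singleton, Finset.card_univ, Fintype.card_fin]
  have hcard2 : ((Finset.univ \ ({i0} : Finset (Fin n))).erase il).card = n - 2 := by
    rw [Finset.card_erase_of_mem hilmem, hcardA]
    omega
  have hS1bound : S1 ≤ ((n:ℝ) - 2) * lam2 - β := by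
    have hsplit : S1 = lam il + ∑ i ∈ (Finset.univ \ ({i0} : Finset (Fin n))).erase il, lam i := by
      rw [hS1def]
      exact (Finset.add_sum_erase _ lam hilmem).symm
    have hbound : ∑ i ∈ (Finset.univ \ ({i0} : Finset (Fin n))).erase il, lam i
        ≤ ((n:ℝ) - 2) * lam2 := by
      have h1 : ∑ i ∈ (Finset.univ \ ({i0} : Finset (Fin n))).erase il, lam i
          ≤ ((Finset.univ \ ({i0} : Finset (Fin n))).erase il).card • lam2 := by
        refine Finset.sum_le_card_nsmul _ _ _ ?_
        intro i hi
        have hii0 : i ≠ i0 := by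
          rw [Finset.mem_erase, Finset.mem_sdiff, Finset.mem_singleton] at hi
          exact hi.2.2
        have hval : 1 ≤ (i : ℕ) := by
          by_contra hlt
          push_neg at hlt
          exact hii0 (Fin.ext (show (i:ℕ) = 0 by omega))
        exact hsort i1 i (le_refl 1) (by rw [Fin.le_def]; exact hval)
      rw [hcard2, nsmul_eq_mul] at h1
      have hcast : ((n - 2 : ℕ) : ℝ) = (n:ℝ) - 2 := by
        have : (2:ℕ) ≤ n := by omega
        push_cast [Nat.cast_sub this]
        ring
      rw [hcast] at h1
      exact h1
    rw [hsplit, hβdef]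
    linarith
  have hm2n : ((m':ℝ) + 2) ≤ (n:ℝ) := by
    have : (m' + 2 : ℕ) ≤ n := le_trans hm2k hkn
    exact_mod_cast this
  have hδlam2 : δ * lam2 ≤ L := hδlam'
  have hM : δ * (S1 + ((m':ℝ) + 2) * L) ≤ 2 * ((n:ℝ) - 1) * L := by
    have ha : δ * S1 ≤ δ * (((n:ℝ) - 2) * lam2 - β) :=
      mul_le_mul_of_nonneg_left hS1bound (le_of_lt hδ0)
    have hb : δ * (((n:ℝ) - 2) * lam2 - β) = ((n:ℝ) - 2) * (δ * lam2) - δ * β := by ring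
    have hc : ((n:ℝ) - 2) * (δ * lam2) ≤ ((n:ℝ) - 2) * L :=
      mul_le_mul_of_nonneg_left hδlam2 (by linarith)
    have hd : 0 ≤ δ * β := by positivity
    have hml : 0 ≤ ((m':ℝ) + 2) * L := by positivity
    have he : δ * (((m':ℝ) + 2) * L) ≤ ((m':ℝ) + 2) * L := mul_le_of_le_one_left hml hδ1
    have hf : ((m':ℝ) + 2) * L ≤ (n:ℝ) * L := mul_le_mul_of_nonneg_right hm2n (le_of_lt hL)
    have hg : δ * (S1 + ((m':ℝ) + 2) * L) = δ * S1 + δ * (((m':ℝ) + 2) * L) := by ring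
    linarith
  have h10 : ε^2 * δ * L * Y ≤ 2 * ((n:ℝ) - 1) * Xm := by
    have hb2 : ε^2 * L^2 ≤ β^2 := by
      have h := pow_le_pow_left₀ (le_of_lt (mul_pos hε0 hL)) hβεL 2
      calc ε^2*L^2 = (ε*L)^2 := by ring
        _ ≤ β^2 := h
    have step : δ * (ε^2 * L^2) * Y ≤ (2 * ((n:ℝ)-1) * L) * Xm := by
      calc δ * (ε^2 * L^2) * Y ≤ δ * β^2 * Y :=
            mul_le_mul_of_nonneg_right
              (mul_le_mul_of_nonneg_left hb2 (le_of_lt hδ0)) (le_of_lt hY)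
        _ = δ * (β^2 * Y) := by ring
        _ ≤ δ * ((S1 + ((m':ℝ)+2)*L) * Xm) := mul_le_mul_of_nonneg_left hkey (le_of_lt hδ0)
        _ = (δ * (S1 + ((m':ℝ)+2)*L)) * Xm := by ring
        _ ≤ (2*((n:ℝ)-1)*L) * Xm := mul_le_mul_of_nonneg_right hM (le_of_lt hXm)
    have hre1 : δ * (ε^2 * L^2) * Y = (ε^2 * δ * L * Y) * L := by ring
    have hre2 : (2*((n:ℝ)-1)*L) * Xm = (2 * ((n:ℝ)-1) * Xm) * L := by ring
    rw [hre1, hre2] at step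
    exact le_of_mul_le_mul_right step hL
  have hXm1Y : Xm1 ≤ Y := by
    rcases Nat.eq_zero_or_pos m' with rfl | hm'pos
    · rw [hXm1def, hYdef, eS_zero, eS_zero]
    obtain ⟨m'', rfl⟩ : ∃ m'', m' = m'' + 1 := ⟨m' - 1, by omega⟩
    have hexp := eS_succ lam hilmem m''
    have hZ : 0 ≤ eS lam (insert il {i0}) m'' := le_of_lt (hP2 il hilmem m'' (by omega))
    rw [hXm1def, hYdef, hexp]
    nlinarith [hilneg, hZ]
  -- final goal
  rw [esymmDel_eq_eS, esymm_eq_eS]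
  have hexpfin : eS lam ∅ (m'+1) = Xm + L * Xm1 := by
    have := eS_succ lam hi0mem m'
    rw [hinsert0] at this
    rw [hXmdef, hXm1def, hLdef]
    exact this
  show eS lam {i0} (m'+1) ≥ min c1 c2 * eS lam ∅ (m'+1)
  rw [hexpfin]
  have h12b : c2 * (L * Y) ≤ Xm / 2 := by
    rw [hc2def, div_mul_eq_mul_div, div_le_div_iff₀ (by linarith) (by norm_num)]
    nlinarith [h10]
  have h12a : min c1 c2 * (L * Xm1) ≤ c2 * (L * Y) := by
    apply mul_le_mul hc0le
    · exact mul_le_mul_of_nonneg_left hXm1Y (le_of_lt hL)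
    · positivity
    · exact le_of_lt hc2pos
  have h12c : min c1 c2 * Xm ≤ Xm / 2 := by
    have h1 : min c1 c2 ≤ 1/2 := le_trans hc0le (by linarith)
    have := mul_le_mul_of_nonneg_right h1 (le_of_lt hXm)
    linarith only [this, hXm]
  have hfinal : min c1 c2 * (Xm + L * Xm1) ≤ Xm := by
    have : min c1 c2 * (Xm + L * Xm1) = min c1 c2 * Xm + min c1 c2 * (L * Xm1) := by ring
    rw [this]
    linarith only [h12a, h12b, h12c]
  linarith only [hfinal]
end

section
/- For every 0 ≤ l < k ≤ n and every λ ∈ Γ_k: (n−k+1)σ_{k−1}(λ)σ_l(λ) − (n−l+1)σ_k(λ)σ_{l−1}(λ) ≥ ((k−l)/k)·(n−k+1)·σ_{k−1}(λ)σ_l(λ). Equivalently, Σ_{i=1}^n ∂[σ_k(λ)/σ_l(λ)]/∂λ_i ≥ ((k−l)/k)(n−k+1)·σ_{k−1}(λ)/σ_l(λ). (The first inequality of display (5.28) in the proof of Lemma 5.4.) -/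
open Finset

set_option maxHeartbeats 1000000
section AuxNewton
open Polynomial

noncomputable def esN {n : ℕ} (lam : Fin n → ℝ) (m : ℕ) : ℝ :=
  ∑ s ∈ Finset.powersetCard m Finset.univ, ∏ i ∈ s, lam i

lemma count_lemma {ι : Type*} [DecidableEq ι] (μ : ι → ℝ) (A : Finset ι) (m : ℕ) :
    ∑ i ∈ A, ∑ s ∈ powersetCard m (A.erase i), ∏ j ∈ s, μ j
      = ((A.card - m : ℕ) : ℝ) * ∑ s ∈ powersetCard m A, ∏ j ∈ s, μ j := by
  rw [Finset.sum_comm' (t' := powersetCard m A) (s' := fun s => A \ s)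
    (f := fun _ s => ∏ j ∈ s, μ j) ?_]
  · rw [Finset.mul_sum]
    refine Finset.sum_congr rfl fun s hs => ?_
    rw [Finset.sum_const, nsmul_eq_mul]
    rw [mem_powersetCard] at hs
    rw [card_sdiff_of_subset hs.1, hs.2]
  · intro i s
    simp only [mem_powersetCard, subset_erase, mem_sdiff]
    tauto

lemma topNewton_fin {d : ℕ} (hd : 2 ≤ d) (μ : Fin d → ℝ) :
    2 * d * (esN μ d * esN μ (d-2)) ≤ ((d:ℝ) - 1) * (esN μ (d-1))^2 := by
  classical
  set P : Fin d → ℝ := fun i => ∏ j ∈ univ.erase i, μ j with hP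
  have hcard : (univ : Finset (Fin d)).card = d := by simp
  have hce : ∀ i : Fin d, (univ.erase i).card = d - 1 := by
    intro i; rw [card_erase_of_mem (mem_univ i), hcard]
  have inner1 : ∀ i : Fin d, ∑ s ∈ powersetCard (d-1) ((univ : Finset (Fin d)).erase i),
      ∏ j ∈ s, μ j = P i := by
    intro i
    rw [← hce i, powersetCard_self, sum_singleton]
  -- h1 : esN μ (d-1) = ∑ P
  have h1 : esN μ (d-1) = ∑ i, P i := by
    have := count_lemma μ (univ : Finset (Fin d)) (d-1)
    rw [hcard] at this
    have h11 : d - (d-1) = 1 := by omega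
    rw [h11] at this
    simp only [inner1] at this
    norm_num at this
    rw [esN]
    exact this.symm
  -- h2 : double sum
  have inner2 : ∀ i : Fin d, ∀ j ∈ (univ : Finset (Fin d)).erase i,
      ∑ s ∈ powersetCard (d-2) (((univ : Finset (Fin d)).erase i).erase j), ∏ k ∈ s, μ k
        = ∏ k ∈ ((univ : Finset (Fin d)).erase i).erase j, μ k := by
    intro i j hj
    have : (((univ : Finset (Fin d)).erase i).erase j).card = d - 2 := by
      rw [card_erase_of_mem, hce i]
      · omega
      · exact hj
    rw [← this, powersetCard_self, sum_singleton]
  have h2 : ∑ i, ∑ j ∈ (univ : Finset (Fin d)).erase i,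
      ∏ k ∈ (((univ : Finset (Fin d)).erase i).erase j), μ k = 2 * esN μ (d-2) := by
    have step : ∀ i : Fin d, ∑ j ∈ (univ : Finset (Fin d)).erase i,
        ∏ k ∈ (((univ : Finset (Fin d)).erase i).erase j), μ k
          = ∑ s ∈ powersetCard (d-2) ((univ : Finset (Fin d)).erase i), ∏ k ∈ s, μ k := by
      intro i
      have := count_lemma μ ((univ : Finset (Fin d)).erase i) (d-2)
      rw [hce i] at this
      have h11 : d - 1 - (d-2) = 1 := by omega
      rw [h11] at this
      calc ∑ j ∈ (univ : Finset (Fin d)).erase i,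
            ∏ k ∈ (((univ : Finset (Fin d)).erase i).erase j), μ k
          = ∑ j ∈ (univ : Finset (Fin d)).erase i,
            ∑ s ∈ powersetCard (d-2) (((univ : Finset (Fin d)).erase i).erase j),
              ∏ k ∈ s, μ k := by
            refine Finset.sum_congr rfl fun j hj => (inner2 i j hj).symm
        _ = _ := by rw [this]; simp
    simp only [step]
    have := count_lemma μ (univ : Finset (Fin d)) (d-2)
    rw [hcard] at this
    have h11 : d - (d-2) = 2 := by omega
    rw [h11] at this
    rw [this, esN]
    norm_num
  have hPd : esN μ d = ∏ j, μ j := by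
    have h := powersetCard_self (univ : Finset (Fin d))
    rw [hcard] at h
    rw [esN, h, sum_singleton]
  -- key identity
  have hmul : ∀ i : Fin d, ∀ j ∈ (univ : Finset (Fin d)).erase i,
      P i * P j = (∏ k, μ k) * ∏ k ∈ (((univ : Finset (Fin d)).erase i).erase j), μ k := by
    intro i j hj
    have hji : j ≠ i := (mem_erase.1 hj).1
    have hij : i ∈ (univ : Finset (Fin d)).erase j := mem_erase.2 ⟨hji.symm, mem_univ i⟩
    have e1 : μ i * P i = ∏ k, μ k := Finset.mul_prod_erase univ μ (mem_univ i)
    have e2 : μ i * ∏ k ∈ (((univ : Finset (Fin d)).erase j).erase i), μ k = P j :=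
      Finset.mul_prod_erase _ μ hij
    have hec : ((univ : Finset (Fin d)).erase j).erase i
        = ((univ : Finset (Fin d)).erase i).erase j := by
      ext x; simp; tauto
    rw [hec] at e2
    calc P i * P j = (μ i * P i) * ∏ k ∈ (((univ : Finset (Fin d)).erase i).erase j), μ k := by
          rw [← e2]; ring
      _ = _ := by rw [e1]
  have key : (∑ i, P i)^2 = (∑ i, (P i)^2) + 2 * (esN μ d * esN μ (d-2)) := by
    have expand : (∑ i, P i)^2 = ∑ i, ∑ j, P i * P j := by
      rw [sq, Finset.sum_mul_sum]
    have split : ∀ i : Fin d, ∑ j, P i * P j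
        = (P i)^2 + ∑ j ∈ (univ : Finset (Fin d)).erase i, P i * P j := by
      intro i
      rw [← Finset.add_sum_erase _ _ (mem_univ i), sq]
    rw [expand]
    simp only [split]
    rw [Finset.sum_add_distrib]
    congr 1
    have : ∀ i : Fin d, ∑ j ∈ (univ : Finset (Fin d)).erase i, P i * P j
        = (∏ k, μ k) * ∑ j ∈ (univ : Finset (Fin d)).erase i,
            ∏ k ∈ (((univ : Finset (Fin d)).erase i).erase j), μ k := by
      intro i
      rw [Finset.mul_sum]
      exact Finset.sum_congr rfl fun j hj => hmul i j hj
    simp only [this]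
    rw [← Finset.mul_sum, h2, hPd]
    ring
  have cs : (∑ i, P i)^2 ≤ (d:ℝ) * ∑ i, (P i)^2 := by
    have := sq_sum_le_card_mul_sum_sq (s := (univ : Finset (Fin d))) (f := P)
    rwa [hcard] at this
  have hd' : (2:ℝ) ≤ (d:ℝ) := by exact_mod_cast hd
  calc 2 * (d:ℝ) * (esN μ d * esN μ (d-2))
      = (d:ℝ) * (2 * (esN μ d * esN μ (d-2))) := by ring
    _ = (d:ℝ) * ((∑ i, P i)^2 - ∑ i, (P i)^2) := by rw [key]; ring
    _ = (d:ℝ) * (∑ i, P i)^2 - (d:ℝ) * ∑ i, (P i)^2 := by ring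
    _ ≤ (d:ℝ) * (∑ i, P i)^2 - (∑ i, P i)^2 := by linarith [cs]
    _ = ((d:ℝ) - 1) * (∑ i, P i)^2 := by ring
    _ = ((d:ℝ) - 1) * (esN μ (d-1))^2 := by rw [h1]

lemma topNewton_ms (s : Multiset ℝ) (hd : 2 ≤ Multiset.card s) :
    2 * (Multiset.card s : ℝ) * (s.esymm (Multiset.card s) * s.esymm (Multiset.card s - 2))
      ≤ ((Multiset.card s : ℝ) - 1) * (s.esymm (Multiset.card s - 1))^2 := by
  obtain ⟨L, rfl⟩ : ∃ L : List ℝ, (L : Multiset ℝ) = s := ⟨s.toList, s.coe_toList⟩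
  set d := L.length with hdL
  set μ : Fin d → ℝ := L.get with hμ
  have hm : (↑L : Multiset ℝ) = (univ : Finset (Fin d)).val.map μ := by
    rw [Fin.univ_def]
    show (↑L : Multiset ℝ) = Multiset.map μ ↑(List.finRange d)
    rw [Multiset.map_coe, ← List.ofFn_eq_map, List.ofFn_get]
  have hcard : Multiset.card (↑L : Multiset ℝ) = d := by simp [hdL]
  have hes : ∀ j : ℕ, (↑L : Multiset ℝ).esymm j = esN μ j := by
    intro j
    rw [hm, Finset.esymm_map_val]
    rfl
  rw [hcard, hes, hes, hes]
  exact topNewton_fin hd μ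

lemma realrooted_iterate (p : Polynomial ℝ) (h : Multiset.card p.roots = p.natDegree)
    (j : ℕ) (hj : j ≤ p.natDegree) :
    (derivative^[j] p).natDegree = p.natDegree - j ∧
    Multiset.card (derivative^[j] p).roots = p.natDegree - j := by
  induction j with
  | zero =>
    constructor
    · simp
    · simpa using h
  | succ j ih =>
    have hj' : j ≤ p.natDegree := by omega
    obtain ⟨hdeg, hroots⟩ := ih hj'
    set r := derivative^[j] p with hr
    rw [Function.iterate_succ_apply', ← hr]
    have h1 : Multiset.card r.roots ≤ Multiset.card (derivative r).roots + 1 :=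
      Polynomial.card_roots_le_derivative r
    have h2 : Multiset.card (derivative r).roots ≤ (derivative r).natDegree :=
      Polynomial.card_roots' _
    have h3 : (derivative r).natDegree ≤ r.natDegree - 1 :=
      Polynomial.natDegree_derivative_le r
    constructor <;> omega

lemma newton_ineq (n : ℕ) (lam : Fin n → ℝ) (m : ℕ) (hm : 1 ≤ m) (hmn : m + 1 ≤ n) :
    ((m:ℝ)+1) * ((n:ℝ)-m+1) * (esN lam (m-1) * esN lam (m+1))
      ≤ (m:ℝ) * ((n:ℝ)-m) * (esN lam m)^2 := by
  classical
  set e : ℕ → ℝ := esN lam with he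
  set p : Polynomial ℝ := ∏ i, (X + C (lam i)) with hp
  have hmono : ∀ i ∈ (univ : Finset (Fin n)), (X + C (lam i)).Monic :=
    fun i _ => monic_X_add_C _
  have hpm : p.Monic := monic_prod_of_monic _ _ hmono
  have hdeg : p.natDegree = n := by
    rw [hp, natDegree_prod_of_monic _ _ hmono]
    simp [natDegree_X_add_C]
  have hproots : Multiset.card p.roots = n := by
    have hrw : p = ∏ i, (X - C (-(lam i))) := by
      rw [hp]; congr 1; ext i; rw [map_neg, sub_neg_eq_add]
    have hne : (∏ i, (X - C (-(lam i))) : Polynomial ℝ) ≠ 0 := by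
      refine prod_ne_zero_iff.mpr fun i _ => X_sub_C_ne_zero _
    rw [hrw, Polynomial.roots_prod _ _ hne, Multiset.card_bind]
    have hone : ∀ i : Fin n, Multiset.card (roots (X - C (-lam i))) = 1 := by
      intro i; rw [roots_X_sub_C]; rfl
    simp only [Function.comp, hone]
    simp
  set t : ℕ := n - m - 1 with ht
  set q : Polynomial ℝ := derivative^[t] p with hq
  obtain ⟨hqdeg, hqroots⟩ := realrooted_iterate p (by rw [hproots, hdeg]) t (by omega)
  rw [← hq] at hqdeg hqroots
  rw [hdeg] at hqdeg hqroots
  have hnt : n - t = m + 1 := by omega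
  rw [hnt] at hqdeg hqroots
  have hq0 : q ≠ 0 := by
    intro h0
    rw [h0, natDegree_zero] at hqdeg
    omega
  -- coefficients of q via p
  have hcoeff : ∀ j, j + t ≤ n → q.coeff j = (((j+t).descFactorial t : ℕ) : ℝ) * e (n - (j+t)) := by
    intro j hjt
    rw [hq, Polynomial.coeff_iterate_derivative, nsmul_eq_mul]
    congr 1
    have hcu : #(univ : Finset (Fin n)) = n := by simp
    have := Finset.prod_X_add_C_coeff (univ : Finset (Fin n)) lam (k := j + t) (by rw [hcu]; omega)
    rw [hcu] at this
    rw [hp, this, he, esN]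
  -- coefficients of q via roots
  have hE : ∀ j, j ≤ m + 1 → q.coeff j
      = q.leadingCoeff * (-1)^(m+1-j) * q.roots.esymm (m+1-j) := by
    intro j hj
    have := Polynomial.coeff_eq_esymm_roots_of_card
      (by rw [hqroots, hqdeg] : Multiset.card q.roots = q.natDegree) (k := j)
      (by rw [hqdeg]; omega)
    rwa [hqdeg] at this
  set lc : ℝ := q.leadingCoeff with hlc
  set E : ℕ → ℝ := fun j => q.roots.esymm j with hEdef
  set c0 : ℝ := ((t.descFactorial t : ℕ) : ℝ) with hc0
  set c1 : ℝ := (((1+t).descFactorial t : ℕ) : ℝ) with hc1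
  set c2 : ℝ := (((2+t).descFactorial t : ℕ) : ℝ) with hc2
  have hn0 : n - (0 + t) = m + 1 := by omega
  have hn1 : n - (1 + t) = m := by omega
  have hn2 : n - (2 + t) = m - 1 := by omega
  have A0 : lc * (-1:ℝ)^(m+1) * E (m+1) = c0 * e (m+1) := by
    have h1 := hcoeff 0 (by omega)
    have h2 := hE 0 (by omega)
    rw [hn0] at h1
    rw [h2] at h1
    simpa [hc0] using h1
  have A1 : lc * (-1:ℝ)^m * E m = c1 * e m := by
    have h1 := hcoeff 1 (by omega)
    have h2 := hE 1 (by omega)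
    rw [hn1] at h1
    rw [h2] at h1
    have : m + 1 - 1 = m := by omega
    rw [this] at h1
    simpa [hc1] using h1
  have A2 : lc * (-1:ℝ)^(m-1) * E (m-1) = c2 * e (m-1) := by
    have h1 := hcoeff 2 (by omega)
    have h2 := hE 2 (by omega)
    rw [hn2] at h1
    rw [h2] at h1
    have : m + 1 - 2 = m - 1 := by omega
    rw [this] at h1
    simpa [hc2] using h1
  -- top Newton for roots of q
  have tn : 2 * ((m:ℝ)+1) * (E (m+1) * E (m-1)) ≤ (m:ℝ) * (E m)^2 := by
    have := topNewton_ms q.roots (by rw [hqroots]; omega)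
    rw [hqroots] at this
    have e1 : m + 1 - 1 = m := by omega
    have e2 : m + 1 - 2 = m - 1 := by omega
    rw [e1, e2] at this
    push_cast at this
    have h' : ((m:ℝ) + 1 - 1) = (m:ℝ) := by ring
    ring_nf at this ⊢
    linarith [this]
  -- signs
  have sgn : ((-1:ℝ)^(m+1)) * ((-1:ℝ)^(m-1)) = 1 := by
    rw [← pow_add]
    have : m + 1 + (m - 1) = 2 * m := by omega
    rw [this, pow_mul]
    norm_num
  have sq1 : ((-1:ℝ)^m)^2 = 1 := by
    rw [← pow_mul, mul_comm, pow_mul]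
    norm_num
  -- transfer top newton through coefficients
  have l1 : (c0 * e (m+1)) * (c2 * e (m-1)) = lc^2 * (E (m+1) * E (m-1)) := by
    rw [← A0, ← A2]
    calc (lc * (-1:ℝ)^(m+1) * E (m+1)) * (lc * (-1:ℝ)^(m-1) * E (m-1))
        = lc^2 * (((-1:ℝ)^(m+1)) * ((-1:ℝ)^(m-1))) * (E (m+1) * E (m-1)) := by ring
      _ = lc^2 * (E (m+1) * E (m-1)) := by rw [sgn]; ring
  have l2 : (c1 * e m)^2 = lc^2 * (E m)^2 := by
    rw [← A1]
    calc (lc * (-1:ℝ)^m * E m)^2 = lc^2 * ((-1:ℝ)^m)^2 * (E m)^2 := by ring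
      _ = lc^2 * (E m)^2 := by rw [sq1]; ring
  have step : 2*((m:ℝ)+1) * ((c0 * e (m+1)) * (c2 * e (m-1))) ≤ (m:ℝ) * (c1 * e m)^2 := by
    rw [l1, l2]
    have h := mul_le_mul_of_nonneg_left tn (sq_nonneg lc)
    calc 2*((m:ℝ)+1) * (lc^2 * (E (m+1) * E (m-1)))
        = lc^2 * (2*((m:ℝ)+1) * (E (m+1) * E (m-1))) := by ring
      _ ≤ lc^2 * ((m:ℝ) * (E m)^2) := h
      _ = (m:ℝ) * (lc^2 * (E m)^2) := by ring
  -- descFactorial identities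
  have f0 : c0 = (t.factorial : ℝ) := by
    rw [hc0, Nat.descFactorial_self]
  have f1 : c1 = ((t+1) : ℝ) * c0 := by
    rw [hc1, f0]
    have h := Nat.factorial_mul_descFactorial (show t ≤ 1 + t by omega)
    have h2 : 1 + t - t = 1 := by omega
    rw [h2, Nat.factorial_one, one_mul] at h
    rw [h]
    have : (1 + t).factorial = (t+1) * t.factorial := by
      have : 1 + t = t + 1 := by omega
      rw [this, Nat.factorial_succ]
    rw [this]
    push_cast
    ring
  have f2 : 2 * c2 = ((t:ℝ)+2) * ((t:ℝ)+1) * c0 := by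
    rw [hc2, f0]
    have h := Nat.factorial_mul_descFactorial (show t ≤ 2 + t by omega)
    have h2 : 2 + t - t = 2 := by omega
    rw [h2] at h
    have h3 : (2:ℕ).factorial = 2 := rfl
    rw [h3] at h
    have h4 : (2 + t).factorial = (t+2) * ((t+1) * t.factorial) := by
      have : 2 + t = (t + 1) + 1 := by omega
      rw [this, Nat.factorial_succ, Nat.factorial_succ]
    rw [h4] at h
    have := congrArg (fun x : ℕ => (x : ℝ)) h
    push_cast at this
    linarith [this]
  have hc0pos : 0 < c0 := by
    rw [f0]
    exact_mod_cast t.factorial_pos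
  -- eliminate constants
  have hpos : (0:ℝ) < 2*((t:ℝ)+1)*c0^2 := by positivity
  have lhs_eq : 2 * (2*((m:ℝ)+1) * ((c0 * e (m+1)) * (c2 * e (m-1))))
      = (((m:ℝ)+1)*((t:ℝ)+2)*(e (m+1) * e (m-1))) * (2*((t:ℝ)+1)*c0^2) := by
    calc 2 * (2*((m:ℝ)+1) * ((c0 * e (m+1)) * (c2 * e (m-1))))
        = ((m:ℝ)+1) * c0 * (2 * c2) * (e (m+1) * e (m-1)) * 2 := by ring
      _ = ((m:ℝ)+1) * c0 * (((t:ℝ)+2) * ((t:ℝ)+1) * c0) * (e (m+1) * e (m-1)) * 2 := by rw [f2]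
      _ = _ := by ring
  have rhs_eq : 2 * ((m:ℝ) * (c1 * e m)^2)
      = ((m:ℝ)*((t:ℝ)+1)*(e m)^2) * (2*((t:ℝ)+1)*c0^2) := by
    rw [f1]; ring
  have key2 : ((m:ℝ)+1)*((t:ℝ)+2)*(e (m+1) * e (m-1)) ≤ (m:ℝ)*((t:ℝ)+1)*(e m)^2 := by
    have h2 := mul_le_mul_of_nonneg_left step (by norm_num : (0:ℝ) ≤ 2)
    rw [lhs_eq, rhs_eq] at h2
    exact le_of_mul_le_mul_right h2 hpos
  have ht1 : (t:ℝ) + 1 = (n:ℝ) - m := by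
    have : t + (m + 1) = n := by omega
    have := congrArg (fun x : ℕ => (x : ℝ)) this
    push_cast at this
    linarith
  have ht2 : (t:ℝ) + 2 = (n:ℝ) - m + 1 := by linarith [ht1]
  rw [ht1, ht2] at key2
  nlinarith [key2]

lemma chain_ineq (n K : ℕ) (lam : Fin n → ℝ) (hK : K ≤ n)
    (hpos : ∀ j, j ≤ K → 0 < esN lam j) (l : ℕ) (hl : 1 ≤ l) :
    ∀ k, l ≤ k → k ≤ K →
    (k:ℝ) * ((n:ℝ) - l + 1) * (esN lam k * esN lam (l-1))
      ≤ (l:ℝ) * ((n:ℝ) - k + 1) * (esN lam (k-1) * esN lam l) := by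
  intro k hlk
  induction k, hlk using Nat.le_induction with
  | base =>
    intro _
    exact le_of_eq (by ring)
  | succ k hlk ih =>
    intro hk
    have IH := ih (by omega)
    have NT := newton_ineq n lam k (by omega) (by omega)
    have hek : 0 < esN lam k := hpos k (by omega)
    have hek1 : 0 < esN lam (k+1) := hpos (k+1) hk
    have hekm : 0 < esN lam (k-1) := hpos (k-1) (by omega)
    have hel : 0 < esN lam l := hpos l (by omega)
    have helm : 0 < esN lam (l-1) := hpos (l-1) (by omega)
    have hkR : (0:ℝ) < (k:ℝ) := by exact_mod_cast (by omega : 0 < k)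
    have hlR : (0:ℝ) < (l:ℝ) := by exact_mod_cast hl
    have hkpos : (0:ℝ) < (k:ℝ) * esN lam k := by positivity
    have hsub : k + 1 - 1 = k := by omega
    rw [hsub]
    refine le_of_mul_le_mul_left ?_ hkpos
    calc ((k:ℝ) * esN lam k) * ((((k:ℕ)+1 : ℕ):ℝ) * ((n:ℝ) - l + 1) * (esN lam (k+1) * esN lam (l-1)))
        = (((k:ℝ)+1) * esN lam (k+1)) * ((k:ℝ) * ((n:ℝ) - l + 1) * (esN lam k * esN lam (l-1))) := by
          push_cast; ring
      _ ≤ (((k:ℝ)+1) * esN lam (k+1)) * ((l:ℝ) * ((n:ℝ) - k + 1) * (esN lam (k-1) * esN lam l)) := by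
          exact mul_le_mul_of_nonneg_left IH (by positivity)
      _ = ((l:ℝ) * esN lam l) * (((k:ℝ)+1) * ((n:ℝ) - k + 1) * (esN lam (k-1) * esN lam (k+1))) := by
          ring
      _ ≤ ((l:ℝ) * esN lam l) * ((k:ℝ) * ((n:ℝ) - k) * (esN lam k)^2) := by
          exact mul_le_mul_of_nonneg_left NT (by positivity)
      _ = ((k:ℝ) * esN lam k) * ((l:ℝ) * ((n:ℝ) - (((k:ℕ)+1 : ℕ):ℝ) + 1) * (esN lam k * esN lam l)) := by
          push_cast; ring


end AuxNewton

/-- The first inequality of display (5.28): for 0 ≤ l < k ≤ n and λ ∈ Γ_k,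
(n−k+1)σ_{k−1}(λ)σ_l(λ) − (n−l+1)σ_k(λ)σ_{l−1}(λ)
  ≥ ((k−l)/k)·(n−k+1)·σ_{k−1}(λ)σ_l(λ). -/
theorem sum_deriv_ge_kl_frac (n k l : ℕ) (hlk : l < k) (hkn : k ≤ n)
    (lam : Fin n → ℝ) (hlam : lam ∈ GardingCone n k) :
    ((n : ℝ) - k + 1) * esymm lam ((k : ℤ) - 1) * esymm lam (l : ℤ)
      - ((n : ℝ) - l + 1) * esymm lam (k : ℤ) * esymm lam ((l : ℤ) - 1)
    ≥ (((k : ℝ) - l) / k) * ((n : ℝ) - k + 1) *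
        (esymm lam ((k : ℤ) - 1) * esymm lam (l : ℤ)) := by
  have hk1 : 1 ≤ k := by omega
  have hkR : (0:ℝ) < (k:ℝ) := by exact_mod_cast (by omega : 0 < k)
  have hconv : ∀ j : ℕ, esymm lam (j:ℤ) = esN lam j := by
    intro j
    rw [esymm, if_neg (by omega), esN]
    norm_num
  have hconvs : ∀ j : ℕ, 1 ≤ j → esymm lam ((j:ℤ) - 1) = esN lam (j-1) := by
    intro j hj
    have h1 : (j:ℤ) - 1 = ((j - 1 : ℕ) : ℤ) := by omega
    rw [h1, hconv]
  have hesN0 : esN lam 0 = 1 := by simp [esN]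
  have hpos : ∀ j, j ≤ k → 0 < esN lam j := by
    intro j hj
    rcases Nat.eq_zero_or_pos j with h0 | h1
    · rw [h0, hesN0]; norm_num
    · rw [← hconv]; exact hlam j h1 hj
  rcases Nat.eq_zero_or_pos l with hl0 | hl1
  · subst hl0
    have hneg : esymm lam ((0:ℕ) : ℤ) = esymm lam 0 := rfl
    have hm1 : esymm lam (((0:ℕ):ℤ) - 1) = 0 := by
      rw [esymm, if_pos]; norm_num
    rw [hm1]
    have hdv : (((k:ℝ) - (0:ℕ)) / k) = 1 := by
      push_cast
      rw [sub_zero, div_self (ne_of_gt hkR)]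
    rw [hdv]
    push_cast
    exact le_of_eq (by ring)
  · have C := chain_ineq n k lam hkn hpos l hl1 k hlk.le le_rfl
    rw [ge_iff_le, ← sub_nonneg]
    have key : ((n : ℝ) - k + 1) * esymm lam ((k : ℤ) - 1) * esymm lam (l : ℤ)
      - ((n : ℝ) - l + 1) * esymm lam (k : ℤ) * esymm lam ((l : ℤ) - 1)
      - (((k : ℝ) - l) / k) * ((n : ℝ) - k + 1) *
        (esymm lam ((k : ℤ) - 1) * esymm lam (l : ℤ))
      = ((l:ℝ) * ((n:ℝ) - k + 1) * (esN lam (k-1) * esN lam l)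
         - (k:ℝ) * ((n:ℝ) - l + 1) * (esN lam k * esN lam (l-1))) / k := by
      rw [hconv l, hconv k, hconvs k hk1, hconvs l hl1]
      field_simp
      ring
    rw [key]
    apply div_nonneg _ (le_of_lt hkR)
    linarith [C]
end
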